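/- arXiv:1502.06896 — 4 statements merged into one kernel-verified Lean document; each statement's English description precedes it below -/
import Mathlib

section
/- Given two paths P and P' in a graph, both from vertex u to vertex v, the path P may be transformed into P' by a finite sequence of reroutings, where a rerouting replaces a subpath of the current path between two vertices x and y by a path Q internally disjoint from the current path with endpoints x and y. -/
/-!
Induct on the part of `P'` not yet shared with the current path. If the current path
`p ++ a` and the target `p ++ b` share the prefix `p` ending at `x ≠ v`, follow `b` from
`x` to the first vertex `y ≠ x` lying on `a`. That segment `r` meets `p ++ a` only in `x`
and `y`, so rerouting along it gives the path `(p ++ r) ++ a[y..]`, whose common prefix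
with the target is longer by the nonempty walk `r`.
-/

/-- `P'` is obtained from `P` by a single rerouting: a subpath of `P` between two
vertices `x` and `y` is replaced by a walk internally disjoint from `P`. -/
def Reroute {V : Type*} {G : SimpleGraph V} {u v : V} (P P' : G.Walk u v) : Prop :=
  ∃ (x y : V) (p₁ : G.Walk u x) (q r : G.Walk x y) (p₂ : G.Walk y v),
    P = p₁.append (q.append p₂) ∧ P' = p₁.append (r.append p₂) ∧
    ∀ w ∈ r.support, w ∈ P.support → w = x ∨ w = y

open Relation SimpleGraph Walk

namespace SimpleGraph.Walk

variable {V : Type*} {G : SimpleGraph V}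

lemma exists_eq_append_forall_mem_eq (S : Set V) {w v : V} (Q : G.Walk w v) (hv : v ∈ S) :
    ∃ (y : V) (r : G.Walk w y) (d : G.Walk y v),
      Q = r.append d ∧ y ∈ S ∧ ∀ z ∈ r.support, z ∈ S → z = y := by
  induction Q with
  | nil => exact ⟨_, nil, nil, rfl, hv, fun z hz _ => by simpa using hz⟩
  | @cons a b c hab Q ih =>
    by_cases ha : a ∈ S
    · exact ⟨a, nil, cons hab Q, rfl, ha, fun z hz _ => by simpa using hz⟩
    · obtain ⟨y, r, d, rfl, hyS, hfirst⟩ := ih hv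
      refine ⟨y, cons hab r, d, rfl, hyS, fun z hz hzS => ?_⟩
      rcases List.mem_cons.mp (support_cons hab r ▸ hz) with rfl | hz
      · exact absurd hzS ha
      · exact hfirst z hz hzS

lemma isPath_append_iff {u x v : V} {p : G.Walk u x} {q : G.Walk x v} :
    (p.append q).IsPath ↔ p.IsPath ∧ q.IsPath ∧ ∀ z ∈ p.support, z ∈ q.support → z = x := by
  refine ⟨fun h => ⟨h.of_append_left, h.of_append_right, fun z hzp hzq => ?_⟩,
    fun ⟨hp, hq, h⟩ => ?_⟩
  · by_contra hzx
    exact h.ne_of_mem_support_of_append hzx hzp hzq rfl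
  · have hq' := hq.support_nodup
    rw [← cons_tail_support, List.nodup_cons] at hq'
    rw [isPath_def, support_append, List.nodup_append]
    refine ⟨hp.support_nodup, hq'.2, fun a hap b hbq hab => ?_⟩
    subst hab
    obtain rfl := h a hap (List.mem_of_mem_tail hbq)
    exact hq'.1 hbq

variable [DecidableEq V]

lemma isPath_append_append_dropUntil {u x y v : V} {p : G.Walk u x} {a : G.Walk x v}
    {r : G.Walk x y} (hya : y ∈ a.support) (ha : (p.append a).IsPath)
    (hpr : (p.append r).IsPath) (hra : ∀ z ∈ r.support, z ∈ a.support → z = x ∨ z = y) :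
    (p.append (r.append (a.dropUntil y hya))).IsPath := by
  obtain ⟨hp, ha', hpa⟩ := isPath_append_iff.mp ha
  obtain ⟨-, hr, hpr⟩ := isPath_append_iff.mp hpr
  have hqd : ((a.takeUntil y hya).append (a.dropUntil y hya)).IsPath := by rwa [take_spec]
  have hd_a : ∀ z ∈ (a.dropUntil y hya).support, z ∈ a.support :=
    fun _ hz => a.support_dropUntil_subset_support hya hz
  have hrd : (r.append (a.dropUntil y hya)).IsPath := by
    refine isPath_append_iff.mpr ⟨hr, ha'.dropUntil hya, fun z hzr hzd => ?_⟩
    rcases hra z hzr (hd_a z hzd) with rfl | rfl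
    · exact (isPath_append_iff.mp hqd).2.2 z (start_mem_support _) hzd
    · rfl
  refine isPath_append_iff.mpr ⟨hp, hrd, fun z hzp hz => ?_⟩
  rcases (mem_support_append_iff _ _).mp hz with hzr | hzd
  · exact hpr z hzp hzr
  · exact hpa z hzp (hd_a z hzd)

end SimpleGraph.Walk

lemma reroute_append_dropUntil {V : Type*} [DecidableEq V] {G : SimpleGraph V} {u x y v : V}
    {p : G.Walk u x} {a : G.Walk x v} {r : G.Walk x y} (hya : y ∈ a.support)
    (hpr : ∀ z ∈ p.support, z ∈ r.support → z = x)
    (hra : ∀ z ∈ r.support, z ∈ a.support → z = x ∨ z = y) :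
    Reroute (p.append a) (p.append (r.append (a.dropUntil y hya))) := by
  refine ⟨x, y, p, a.takeUntil y hya, r, _, by rw [take_spec], rfl, fun z hzr hz => ?_⟩
  rcases (mem_support_append_iff _ _).mp hz with hzp | hza
  · exact .inl (hpr z hzp hzr)
  · exact hra z hzr hza

theorem reflTransGen_reroute_append {V : Type*} {G : SimpleGraph V} {u x v : V}
    (p : G.Walk u x) (a b : G.Walk x v) (ha : (p.append a).IsPath) (hb : (p.append b).IsPath) :
    ReflTransGen (fun P P' : G.Walk u v => P.IsPath ∧ P'.IsPath ∧ Reroute P P')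
      (p.append a) (p.append b) := by
  by_cases hxv : x = v
  · subst hxv
    rw [eq_nil_iff_nil.mpr (isPath_iff_nil.mp ha.of_append_right),
      eq_nil_iff_nil.mpr (isPath_iff_nil.mp hb.of_append_right)]
  obtain ⟨y, r, d', hb_eq, ⟨hya, hyx⟩, hr⟩ :=
    b.exists_eq_append_forall_mem_eq {z | z ∈ a.support ∧ z ≠ x} ⟨a.end_mem_support, Ne.symm hxv⟩
  subst hb_eq
  classical
  rw [append_assoc] at hb
  have hra : ∀ z ∈ r.support, z ∈ a.support → z = x ∨ z = y := fun z hz hza =>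
    or_iff_not_imp_left.mpr fun hzx => hr z hz ⟨hza, hzx⟩
  have hnew := isPath_append_append_dropUntil hya ha hb.of_append_left hra
  have hstep := reroute_append_dropUntil hya (isPath_append_iff.mp hb.of_append_left).2.2 hra
  have hrest := reflTransGen_reroute_append (p.append r) (a.dropUntil y hya) d'
    (by rwa [← append_assoc]) hb
  rw [← append_assoc, ← append_assoc] at hrest
  exact .head ⟨ha, hnew, hstep⟩ hrest
termination_by b.length
decreasing_by
  have : r.length ≠ 0 := fun h => hyx (eq_of_length_eq_zero h).symm
  rw [hb_eq, length_append]
  omega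

theorem stmt_2 {V : Type*} (G : SimpleGraph V) {u v : V} (P P' : G.Walk u v)
    (hP : P.IsPath) (hP' : P'.IsPath) :
    Relation.ReflTransGen
      (fun a b : G.Walk u v => a.IsPath ∧ b.IsPath ∧ Reroute a b) P P' := by
  simpa using reflTransGen_reroute_append .nil P P' (by simpa) (by simpa)
end

section
/- In a biased graph, if C' is a cycle obtained from a cycle C by rerouting along a balanced cycle, then C and C' have the same bias (both balanced or both unbalanced). -/
open Set

/-! ### Matroid core -/

namespace Matroid

variable {α : Type*}

/-- A circuit: a minimal dependent set. -/
def Circuit' (M : Matroid α) (C : Set α) : Prop :=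
  M.Dep C ∧ ∀ D, D ⊂ C → M.Indep D

/-- A matroid is connected if its ground set is nonempty and every two distinct
elements lie in a common circuit. -/
def Connected' (M : Matroid α) : Prop :=
  M.E.Nonempty ∧ ∀ e ∈ M.E, ∀ f ∈ M.E, e ≠ f → ∃ C, M.Circuit' C ∧ e ∈ C ∧ f ∈ C

/-- Deletion of a set of elements. -/
def del (M : Matroid α) (D : Set α) : Matroid α := M ↾ (M.E \ D)

/-- Contraction of a set of elements. -/
def con (M : Matroid α) (C : Set α) : Matroid α := (M✶.del C)✶

/-- `N` is a minor of `M`. -/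
def IsMinor' (N M : Matroid α) : Prop :=
  ∃ C D : Set α, Disjoint C D ∧ C ⊆ M.E ∧ D ⊆ M.E ∧ N = (M.con C).del D

def IsStrictMinor' (N M : Matroid α) : Prop := N.IsMinor' M ∧ N ≠ M

/-- The rank (as an extended natural number) of a set in a matroid. -/
noncomputable def eRk' (M : Matroid α) (X : Set α) : ℕ∞ :=
  ⨆ I : {I : Set α // M.Indep I ∧ I ⊆ X}, I.1.encard

/-- A cocircuit is a circuit of the dual matroid. -/
def Cocircuit' (M : Matroid α) (K : Set α) : Prop := M✶.Circuit' K

/-- A loop is a one-element circuit. -/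
def IsLoopElem (M : Matroid α) (e : α) : Prop := M.Circuit' {e}

end Matroid

/-! ### Biased graph core -/

universe u v

/-- A multigraph, given by assigning two (possibly equal) endpoints to each edge. -/
structure MultiGraph (V : Type u) (E : Type v) where
  fst : E → V
  snd : E → V

namespace MultiGraph

variable {V : Type u} {E : Type v} (G : MultiGraph V E)

/-- Vertex `v` is incident with edge `e`. -/
def Inc (v : V) (e : E) : Prop := G.fst e = v ∨ G.snd e = v

/-- `e` is a loop. -/
def IsLoopEdge (e : E) : Prop := G.fst e = G.snd e

/-- `e` is a link (an edge with two distinct endpoints). -/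
def IsLink (e : E) : Prop := G.fst e ≠ G.snd e

/-- The set of vertices incident with an edge in `X`. -/
def VSet (X : Set E) : Set V := {v | ∃ e ∈ X, G.Inc v e}

/-- The degree of `v` in the edge set `X` (loops count twice). -/
noncomputable def deg (X : Set E) (v : V) : ℕ :=
  {e | e ∈ X ∧ G.fst e = v}.ncard + {e | e ∈ X ∧ G.snd e = v}.ncard

/-- Two edges of `X` are adjacent if they share a vertex. -/
def EdgeAdj (X : Set E) (e f : E) : Prop := e ∈ X ∧ f ∈ X ∧ ∃ v, G.Inc v e ∧ G.Inc v f

/-- The subgraph induced by the edge set `X` is connected. -/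
def ConnectedOn (X : Set E) : Prop :=
  ∀ ⦃e f⦄, e ∈ X → f ∈ X → Relation.ReflTransGen (G.EdgeAdj X) e f

/-- An edge set is a cycle if it is finite, nonempty, connected and every
incident vertex has degree exactly two. -/
def IsCycle (C : Set E) : Prop :=
  C.Finite ∧ C.Nonempty ∧ G.ConnectedOn C ∧ ∀ v ∈ G.VSet C, G.deg C v = 2

/-- The ends of an edge set: its vertices of degree one. -/
def Ends (P : Set E) : Set V := {v | v ∈ G.VSet P ∧ G.deg P v = 1}

/-- An edge set is a path if it is finite, nonempty, connected, has maximum degree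
two and exactly two vertices of degree one. -/
def IsPath (P : Set E) : Prop :=
  P.Finite ∧ P.Nonempty ∧ G.ConnectedOn P ∧ (∀ v ∈ G.VSet P, G.deg P v ≤ 2) ∧
    (G.Ends P).ncard = 2

/-- `C` is (the edge set of) a connected component of the subgraph induced by `X`. -/
def IsComponentOf (C X : Set E) : Prop :=
  ∃ e ∈ X, C = {f | f ∈ X ∧ Relation.ReflTransGen (G.EdgeAdj X) e f}

end MultiGraph

/-- A biased graph: a multigraph with a distinguished collection of "balanced" edge sets. -/
structure BiasedGraph (V : Type u) (E : Type v) extends MultiGraph V E where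
  Balanced : Set (Set E)

namespace BiasedGraph

variable {V : Type u} {E : Type v} (Ω : BiasedGraph V E)

/-- The theta property: every balanced set is a cycle, and no theta subgraph
(a union of two cycles whose symmetric difference is a cycle) contains
exactly two balanced cycles. -/
def ThetaProperty : Prop :=
  (∀ C ∈ Ω.Balanced, Ω.toMultiGraph.IsCycle C) ∧
  ∀ C₁ C₂ C₃ : Set E, Ω.toMultiGraph.IsCycle C₁ → Ω.toMultiGraph.IsCycle C₂ →
    Ω.toMultiGraph.IsCycle C₃ → C₃ = symmDiff C₁ C₂ →
    C₁ ∈ Ω.Balanced → C₂ ∈ Ω.Balanced → C₃ ∈ Ω.Balanced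

def IsBalancedCycle (C : Set E) : Prop := Ω.toMultiGraph.IsCycle C ∧ C ∈ Ω.Balanced

def IsUnbalancedCycle (C : Set E) : Prop := Ω.toMultiGraph.IsCycle C ∧ C ∉ Ω.Balanced

/-- The subgraph induced by `X` is balanced: every cycle inside it is balanced. -/
def BalancedOn (X : Set E) : Prop :=
  ∀ C ⊆ X, Ω.toMultiGraph.IsCycle C → C ∈ Ω.Balanced

/-- A contrabalanced theta subgraph: all three of its cycles are unbalanced. -/
def IsContraTheta (T : Set E) : Prop :=
  ∃ C₁ C₂ C₃ : Set E, Ω.IsUnbalancedCycle C₁ ∧ Ω.IsUnbalancedCycle C₂ ∧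
    Ω.IsUnbalancedCycle C₃ ∧ C₃ = symmDiff C₁ C₂ ∧ T = C₁ ∪ C₂

/-- Tight handcuffs: two edge-disjoint unbalanced cycles meeting in exactly one vertex. -/
def IsTightHandcuff (H : Set E) : Prop :=
  ∃ C₁ C₂ : Set E, Ω.IsUnbalancedCycle C₁ ∧ Ω.IsUnbalancedCycle C₂ ∧ Disjoint C₁ C₂ ∧
    (∃ v, Ω.toMultiGraph.VSet C₁ ∩ Ω.toMultiGraph.VSet C₂ = {v}) ∧ H = C₁ ∪ C₂

/-- Loose handcuffs: two vertex-disjoint unbalanced cycles joined by a path meeting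
them only in its two ends. -/
def IsLooseHandcuff (H : Set E) : Prop :=
  ∃ C₁ C₂ P : Set E, Ω.IsUnbalancedCycle C₁ ∧ Ω.IsUnbalancedCycle C₂ ∧
    Disjoint (Ω.toMultiGraph.VSet C₁) (Ω.toMultiGraph.VSet C₂) ∧
    Ω.toMultiGraph.IsPath P ∧ Disjoint P (C₁ ∪ C₂) ∧
    (∃ a b, a ≠ b ∧ Ω.toMultiGraph.Ends P = {a, b} ∧
      Ω.toMultiGraph.VSet P ∩ Ω.toMultiGraph.VSet C₁ = {a} ∧
      Ω.toMultiGraph.VSet P ∩ Ω.toMultiGraph.VSet C₂ = {b}) ∧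
    H = C₁ ∪ C₂ ∪ P

/-- The circuits of the frame matroid of a biased graph. -/
def FrameCircuit (X : Set E) : Prop :=
  Ω.IsBalancedCycle X ∨ Ω.IsContraTheta X ∨ Ω.IsTightHandcuff X ∨ Ω.IsLooseHandcuff X

end BiasedGraph

/-- A biased graph (on the ground set of `M`) represents the matroid `M`:
it satisfies the theta property and the circuits of `M` are exactly its frame circuits. -/
def BiasedGraph.Represents {V : Type u} {α : Type v} (M : Matroid α)
    (Ω : BiasedGraph V ↥M.E) : Prop :=
  Ω.ThetaProperty ∧ ∀ X : Set ↥M.E, M.Circuit' (Subtype.val '' X) ↔ Ω.FrameCircuit X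

/-- A matroid is frame if some biased graph represents it. -/
def Matroid.IsFrame {α : Type v} (M : Matroid α) : Prop :=
  ∃ (V : Type v) (Ω : BiasedGraph V ↥M.E), BiasedGraph.Represents M Ω

/-- A matroidal `(M, L)` is frame if some biased graph representing `M` has all
elements of `L` as unbalanced loops. -/
def Matroid.IsFrameMatroidal {α : Type v} (M : Matroid α) (L : Set α) : Prop :=
  ∃ (V : Type v) (Ω : BiasedGraph V ↥M.E), BiasedGraph.Represents M Ω ∧
    ∀ e : ↥M.E, e.1 ∈ L → Ω.toMultiGraph.IsLoopEdge e ∧ {e} ∉ Ω.Balanced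

theorem Set.diff_union_eq_symmDiff_union {α : Type*} {C P Q : Set α} (hPC : P ⊆ C)
    (hQC : Disjoint Q C) : (C \ P) ∪ Q = symmDiff C (P ∪ Q) := by
  ext x
  have hP : x ∈ P → x ∈ C := @hPC x
  have hQ : x ∈ Q → x ∉ C := fun h => disjoint_left.mp hQC h
  simp only [Set.symmDiff_def, mem_union, mem_sdiff]
  tauto

namespace BiasedGraph

variable {V : Type u} {E : Type v} {Ω : BiasedGraph V E}

theorem ThetaProperty.mem_balanced_iff_of_eq_symmDiff (hθ : Ω.ThetaProperty)
    {C C' D : Set E} (hC : Ω.toMultiGraph.IsCycle C) (hC' : Ω.toMultiGraph.IsCycle C')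
    (hD : Ω.IsBalancedCycle D) (hC'D : C' = symmDiff C D) :
    C ∈ Ω.Balanced ↔ C' ∈ Ω.Balanced := by
  have hCD : C = symmDiff C' D := by rw [hC'D, symmDiff_symmDiff_cancel_right]
  exact ⟨fun h => hθ.2 C D C' hC hD.1 hC' hC'D h hD.2,
    fun h => hθ.2 C' D C hC' hD.1 hC hCD h hD.2⟩

end BiasedGraph

theorem stmt_3_general {V E : Type*} (Ω : BiasedGraph V E) (hθ : Ω.ThetaProperty)
    (C C' P Q : Set E) (hC : Ω.toMultiGraph.IsCycle C) (hC' : Ω.toMultiGraph.IsCycle C')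
    (hPC : P ⊆ C) (hQC : Disjoint Q C)
    (hPQ : Ω.IsBalancedCycle (P ∪ Q))
    (hC'def : C' = (C \ P) ∪ Q) :
    (C ∈ Ω.Balanced ↔ C' ∈ Ω.Balanced) :=
  hθ.mem_balanced_iff_of_eq_symmDiff hC hC' hPQ
    (hC'def.trans (Set.diff_union_eq_symmDiff_union hPC hQC))

theorem stmt_3 {V E : Type*} (Ω : BiasedGraph V E) (hθ : Ω.ThetaProperty)
    (C C' P Q : Set E) (hC : Ω.toMultiGraph.IsCycle C) (hC' : Ω.toMultiGraph.IsCycle C')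
    (hP : Ω.toMultiGraph.IsPath P) (hQ : Ω.toMultiGraph.IsPath Q)
    (hPC : P ⊆ C) (hQC : Disjoint Q C)
    (hint : Ω.toMultiGraph.VSet Q ∩ Ω.toMultiGraph.VSet C = Ω.toMultiGraph.Ends Q)
    (hends : Ω.toMultiGraph.Ends P = Ω.toMultiGraph.Ends Q)
    (hPQ : Ω.IsBalancedCycle (P ∪ Q))
    (hC'def : C' = (C \ P) ∪ Q) :
    (C ∈ Ω.Balanced ↔ C' ∈ Ω.Balanced) :=
  stmt_3_general Ω hθ C C' P Q hC hC' hPC hQC hPQ hC'def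
end

section
/- A biased graph (G, B) admits a signature Σ ⊆ E(G) with B = B_Σ (where a cycle is in B_Σ iff it contains an even number of edges of Σ) if and only if (G, B) contains no contrabalanced theta subgraph, i.e., no theta subgraph all three of whose cycles are unbalanced. -/
open Set

/-! ### Biased graph core -/

universe u v

/-!
Under a signature `S` the sign `|C ∩ S| mod 2` is additive under symmetric difference, so the
three cycles `C₁`, `C₂`, `C₁ ∆ C₂` of a theta cannot all be odd.

Conversely, with no contrabalanced theta, the bias of a cycle (`0` if balanced, `1` if not, in
`ZMod 2`) is additive on thetas by the theta property. By induction on an edge set `A` we find a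
signature giving every cycle inside `A` its bias: take one, `S'`, for `A \ {e}` and flip `e` if a
fixed cycle `C₀ ∋ e` gets the wrong sign. This is right for every cycle `C ∋ e` once
`bias C + bias C₀ = sign (C ∆ C₀)`. The even-degree set `C ∆ C₀` avoids `e` and contains a cycle
`D`; if `D = C ∆ C₀` this is the theta case. Otherwise the rest `U` contains a cycle meeting `C₀`,
and for `g ∈ D ∩ C`, `h ∈ U ∩ C₀` the signatures for `A \ {g}` and `A \ {h}` given by induction
settle the identity, since any two signatures agree on the even-degree sets (disjoint unions of
cycles) inside both of their domains.
-/

open scoped symmDiff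

theorem Set.ncard_symmDiff_add_two_mul_ncard_inter {α : Type*} (s t : Set α)
    (hs : s.Finite := by toFinite_tac) (ht : t.Finite := by toFinite_tac) :
    (s ∆ t).ncard + 2 * (s ∩ t).ncard = s.ncard + t.ncard := by
  have hunion : s ∪ t = s ∆ t ∪ s ∩ t := (symmDiff_sup_inf s t).symm
  have hdisj : Disjoint (s ∆ t) (s ∩ t) := disjoint_symmDiff_inf s t
  rw [← ncard_union_add_ncard_inter s t hs ht, hunion,
    ncard_union_eq hdisj ((hs.union ht).subset symmDiff_subset_union) (hs.inter_of_left t)]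
  ring

theorem Set.natCast_ncard_symmDiff {α : Type*} (s t : Set α)
    (hs : s.Finite := by toFinite_tac) (ht : t.Finite := by toFinite_tac) :
    ((s ∆ t).ncard : ZMod 2) = s.ncard + t.ncard := by
  have h := congrArg (Nat.cast : ℕ → ZMod 2) (ncard_symmDiff_add_two_mul_ncard_inter s t hs ht)
  push_cast at h
  rwa [show (2 : ZMod 2) = 0 from rfl, zero_mul, add_zero] at h

theorem Set.symmDiff_subset_sdiff_singleton {α : Type*} {s t u : Set α} {a : α} (hs : s ⊆ u)
    (ht : t ⊆ u) (has : a ∈ s) (hat : a ∈ t) : s ∆ t ⊆ u \ {a} := fun x hx =>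
  ⟨(symmDiff_subset_union hx).elim (hs ·) (ht ·), by
    rintro rfl; simp [mem_symmDiff, has, hat] at hx⟩

namespace MultiGraph

variable {V E : Type*} {G : MultiGraph V E} {X Y C : Set E} {v : V}

lemma deg_eq (X : Set E) (v : V) :
    G.deg X v = (X ∩ G.fst ⁻¹' {v}).ncard + (X ∩ G.snd ⁻¹' {v}).ncard := rfl

lemma VSet_mono (h : X ⊆ Y) : G.VSet X ⊆ G.VSet Y :=
  fun _ ⟨e, he, hv⟩ => ⟨e, h he, hv⟩

def component (G : MultiGraph V E) (X : Set E) (a : E) : Set E :=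
  {f | f ∈ X ∧ Relation.ReflTransGen (G.EdgeAdj X) a f}

lemma component_subset (X : Set E) (a : E) : G.component X a ⊆ X := fun _ h => h.1

def EvenDeg (G : MultiGraph V E) (X : Set E) : Prop := ∀ v, Even (G.deg X v)

lemma deg_component {a : E} (hv : v ∈ G.VSet (G.component X a)) :
    G.deg (G.component X a) v = G.deg X v := by
  obtain ⟨f, hf, hvf⟩ := hv
  have hfiber : ∀ p : E → V, (∀ e, p e = v → G.Inc v e) →
      G.component X a ∩ p ⁻¹' {v} = X ∩ p ⁻¹' {v} := fun p hp =>
    subset_antisymm (inter_subset_inter_left _ (component_subset X a))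
      fun e ⟨he, hpe⟩ => ⟨⟨he, hf.2.tail ⟨hf.1, he, v, hvf, hp e hpe⟩⟩, hpe⟩
  rw [deg_eq, deg_eq, hfiber G.fst fun _ => Or.inl, hfiber G.snd fun _ => Or.inr]

section Finite

variable [Finite E]

lemma finite_VSet (X : Set E) : (G.VSet X).Finite :=
  ((finite_range G.fst).union (finite_range G.snd)).subset
    fun _ ⟨e, _, hv⟩ => hv.imp (fun h => ⟨e, h⟩) (fun h => ⟨e, h⟩)

lemma deg_union (h : Disjoint X Y) (v : V) : G.deg (X ∪ Y) v = G.deg X v + G.deg Y v := by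
  simp only [deg_eq, union_inter_distrib_right]
  rw [ncard_union_eq (h.mono inter_subset_left inter_subset_left),
    ncard_union_eq (h.mono inter_subset_left inter_subset_left)]
  ring

lemma deg_mono (h : X ⊆ Y) (v : V) : G.deg X v ≤ G.deg Y v :=
  add_le_add (ncard_le_ncard (inter_subset_inter_left _ h))
    (ncard_le_ncard (inter_subset_inter_left _ h))

lemma deg_symmDiff_add_two_mul (X Y : Set E) (v : V) :
    G.deg (X ∆ Y) v + 2 * G.deg (X ∩ Y) v = G.deg X v + G.deg Y v := by
  simp only [deg_eq, inter_symmDiff_distrib_right]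
  rw [inter_inter_distrib_right X Y, inter_inter_distrib_right X Y]
  have h₁ := ncard_symmDiff_add_two_mul_ncard_inter (X ∩ G.fst ⁻¹' {v}) (Y ∩ G.fst ⁻¹' {v})
  have h₂ := ncard_symmDiff_add_two_mul_ncard_inter (X ∩ G.snd ⁻¹' {v}) (Y ∩ G.snd ⁻¹' {v})
  omega

lemma deg_eq_zero (hv : v ∉ G.VSet X) : G.deg X v = 0 := by
  rw [deg_eq, Nat.add_eq_zero_iff, ncard_eq_zero, ncard_eq_zero, eq_empty_iff_forall_notMem,
    eq_empty_iff_forall_notMem]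
  exact ⟨fun e ⟨he, hev⟩ => hv ⟨e, he, Or.inl hev⟩, fun e ⟨he, hev⟩ => hv ⟨e, he, Or.inr hev⟩⟩

lemma one_le_deg (hv : v ∈ G.VSet X) : 1 ≤ G.deg X v := by
  obtain ⟨e, he, hev | hev⟩ := hv
  · have := (ncard_pos (s := X ∩ G.fst ⁻¹' {v})).2 ⟨e, he, hev⟩
    rw [deg_eq]; omega
  · have := (ncard_pos (s := X ∩ G.snd ⁻¹' {v})).2 ⟨e, he, hev⟩
    rw [deg_eq]; omega

lemma two_le_deg_of_isLoopEdge {e : E} (he : e ∈ X) (hl : G.IsLoopEdge e) :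
    2 ≤ G.deg X (G.fst e) := by
  have h₁ := (ncard_pos (s := X ∩ G.fst ⁻¹' {G.fst e})).2 ⟨e, he, rfl⟩
  have h₂ := (ncard_pos (s := X ∩ G.snd ⁻¹' {G.fst e})).2 ⟨e, he, hl.symm⟩
  rw [deg_eq]; omega

lemma deg_lt_deg_of_mem_sdiff {g : E} (hYX : Y ⊆ X) (hgX : g ∈ X) (hgY : g ∉ Y)
    (hg : G.Inc v g) : G.deg Y v < G.deg X v :=
  calc G.deg Y v ≤ G.deg (X \ {g}) v := deg_mono (subset_sdiff_singleton hYX hgY) v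
    _ < G.deg (X \ {g}) v + G.deg {g} v := by
      have := one_le_deg (G := G) (X := {g}) ⟨g, rfl, hg⟩; omega
    _ = G.deg X v := by
      rw [← deg_union disjoint_sdiff_left, sdiff_union_of_subset (singleton_subset_iff.2 hgX)]

lemma sum_deg_eq_two_mul_ncard {s : Finset V} (hs : G.VSet X ⊆ s) :
    ∑ v ∈ s, G.deg X v = 2 * X.ncard := by
  classical
  have hfiber : ∀ p : E → V, (∀ e ∈ X, G.Inc (p e) e) →
      ∑ v ∈ s, (X ∩ p ⁻¹' {v}).ncard = X.ncard := by
    intro p hp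
    rw [ncard_eq_toFinset_card X, Finset.card_eq_sum_card_fiberwise (f := p) (t := s)
      fun e he => hs ⟨e, (toFinite X).mem_toFinset.1 he, hp e ((toFinite X).mem_toFinset.1 he)⟩]
    refine Finset.sum_congr rfl fun v _ => ?_
    rw [← ncard_coe_finset]
    congr 1
    ext e
    simp
  simp only [deg_eq, Finset.sum_add_distrib, hfiber G.fst (fun _ _ => Or.inl rfl),
    hfiber G.snd (fun _ _ => Or.inr rfl)]
  ring

lemma ncard_VSet_lt (h2 : ∀ v ∈ G.VSet X, 2 ≤ G.deg X v)
    (h3 : ∃ v ∈ G.VSet X, 3 ≤ G.deg X v) : (G.VSet X).ncard < X.ncard := by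
  obtain ⟨v, hv, hv3⟩ := h3
  have hfin := finite_VSet (G := G) X
  have hlt : ∑ _ ∈ hfin.toFinset, 2 < ∑ w ∈ hfin.toFinset, G.deg X w :=
    Finset.sum_lt_sum (fun w hw => h2 w (hfin.mem_toFinset.1 hw))
      ⟨v, hfin.mem_toFinset.2 hv, by omega⟩
  rw [sum_deg_eq_two_mul_ncard (fun w hw => hfin.mem_toFinset.2 hw), Finset.sum_const,
    ← ncard_eq_toFinset_card _ hfin, smul_eq_mul] at hlt
  omega

lemma IsCycle.evenDeg (hC : G.IsCycle C) : G.EvenDeg C := fun v => by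
  by_cases hv : v ∈ G.VSet C
  · rw [hC.2.2.2 v hv]; exact even_two
  · rw [deg_eq_zero hv]; exact ⟨0, rfl⟩

lemma EvenDeg.symmDiff (hX : G.EvenDeg X) (hY : G.EvenDeg Y) : G.EvenDeg (X ∆ Y) := fun v => by
  have := deg_symmDiff_add_two_mul (G := G) X Y v
  obtain ⟨a, ha⟩ := hX v
  obtain ⟨b, hb⟩ := hY v
  exact ⟨G.deg (X ∆ Y) v / 2, by omega⟩

lemma EvenDeg.sdiff (hX : G.EvenDeg X) (hY : G.EvenDeg Y) (hYX : Y ⊆ X) : G.EvenDeg (X \ Y) := by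
  rw [← symmDiff_of_ge hYX]; exact hX.symmDiff hY

lemma IsCycle.eq_of_evenDeg_subset (hC : G.IsCycle C) (hYC : Y ⊆ C) (hY : G.EvenDeg Y)
    (hne : Y.Nonempty) : Y = C := by
  obtain ⟨e₀, he₀⟩ := hne
  have hclosed : ∀ f g, f ∈ Y → G.EdgeAdj C f g → g ∈ Y := by
    rintro f g hf ⟨hfC, hgC, v, hvf, hvg⟩
    by_contra hgY
    have hlt := deg_lt_deg_of_mem_sdiff hYC hgC hgY hvg
    have h1 := one_le_deg (⟨f, hf, hvf⟩ : v ∈ G.VSet Y)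
    rw [hC.2.2.2 v ⟨f, hfC, hvf⟩] at hlt
    obtain ⟨k, hk⟩ := hY v
    omega
  refine subset_antisymm hYC fun g hg => ?_
  induction hC.2.2.1 (hYC he₀) hg with
  | refl => exact he₀
  | tail _ hadj ih => exact hclosed _ _ (ih hadj.1) hadj

-- Pruning a pendant edge also deletes a vertex, so `|VSet X| ≤ |X|` survives and keeps `X`
-- nonempty.
lemma exists_subset_two_le_deg_of_ncard_VSet_le (hne : X.Nonempty)
    (hX : (G.VSet X).ncard ≤ X.ncard) :
    ∃ Y ⊆ X, Y.Nonempty ∧ ∀ v ∈ G.VSet Y, 2 ≤ G.deg Y v := by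
  induction X using WellFoundedLT.induction with
  | _ X ih =>
  by_cases h2 : ∀ v ∈ G.VSet X, 2 ≤ G.deg X v
  · exact ⟨X, subset_rfl, hne, h2⟩
  push Not at h2
  obtain ⟨v, hvX, hv1⟩ := h2
  have hdeg : G.deg X v = 1 := by have := one_le_deg hvX; omega
  obtain ⟨e, heX, hve⟩ := id hvX
  have hlink : G.fst e ≠ G.snd e := fun hl => by
    have h2 := two_le_deg_of_isLoopEdge heX hl
    rw [show G.fst e = v from hve.elim id (hl.trans ·)] at h2
    omega
  have hv : v ∉ G.VSet (X \ {e}) := by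
    rintro ⟨f, ⟨hfX, hfe⟩, hvf⟩
    have := deg_lt_deg_of_mem_sdiff (singleton_subset_iff.2 heX) hfX hfe hvf
    have := one_le_deg (G := G) (X := {e}) ⟨e, rfl, hve⟩
    omega
  have hVSet : (G.VSet (X \ {e})).ncard + 1 ≤ (G.VSet X).ncard := by
    have hsub : G.VSet (X \ {e}) ⊆ G.VSet X \ {v} :=
      fun w hw => ⟨VSet_mono sdiff_subset hw, fun h => hv (h ▸ hw)⟩
    rw [← ncard_sdiff_singleton_add_one hvX (finite_VSet X)]
    exact Nat.add_le_add_right (ncard_le_ncard hsub ((finite_VSet X).sdiff)) 1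
  have hends : 2 ≤ (G.VSet X).ncard := by
    rw [← ncard_pair hlink]
    exact ncard_le_ncard (pair_subset ⟨e, heX, Or.inl rfl⟩ ⟨e, heX, Or.inr rfl⟩) (finite_VSet X)
  have hcard := ncard_sdiff_singleton_add_one heX
  obtain ⟨Y, hY, hYne, hY2⟩ := ih (X \ {e}) (sdiff_singleton_ssubset.2 heX)
    ((ncard_pos).1 (by omega)) (by omega)
  exact ⟨Y, hY.trans sdiff_subset, hYne, hY2⟩

-- A vertex of degree at least three gives `|VSet X| < |X|`, so removing one of its edges and
-- pruning leaves a smaller candidate; a 2-regular `X` is a cycle unless it has a smaller component.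
lemma exists_isCycle_subset_of_two_le_deg (hne : X.Nonempty)
    (h2 : ∀ v ∈ G.VSet X, 2 ≤ G.deg X v) : ∃ C ⊆ X, G.IsCycle C := by
  induction X using WellFoundedLT.induction with
  | _ X ih =>
  by_cases h3 : ∃ v ∈ G.VSet X, 3 ≤ G.deg X v
  · obtain ⟨v, hv, -⟩ := id h3
    have hlt := ncard_VSet_lt h2 h3
    obtain ⟨a, haX, -⟩ := id hv
    have hpos := (ncard_pos (finite_VSet (G := G) X)).2 ⟨v, hv⟩
    have hcard := ncard_sdiff_singleton_add_one haX
    have hVSet := ncard_le_ncard (VSet_mono (G := G) (sdiff_subset (s := X) (t := {a})))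
      (finite_VSet X)
    obtain ⟨Y, hYX, hYne, hY2⟩ := exists_subset_two_le_deg_of_ncard_VSet_le (G := G)
      (X := X \ {a}) ((ncard_pos).1 (by omega)) (by omega)
    obtain ⟨C, hCY, hC⟩ := ih Y (ssubset_of_subset_of_ssubset hYX (sdiff_singleton_ssubset.2 haX))
      hYne hY2
    exact ⟨C, hCY.trans (hYX.trans sdiff_subset), hC⟩
  push Not at h3
  have hdeg2 : ∀ v ∈ G.VSet X, G.deg X v = 2 := fun v hv => by
    have := h2 v hv; have := h3 v hv; omega
  by_cases hconn : G.ConnectedOn X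
  · exact ⟨X, subset_rfl, toFinite X, hne, hconn, hdeg2⟩
  simp only [ConnectedOn, not_forall] at hconn
  obtain ⟨a, b, ha, hb, hab⟩ := hconn
  have hssub : G.component X a ⊂ X :=
    ssubset_of_subset_not_subset (component_subset X a) fun h => hab (h hb).2
  obtain ⟨C, hCY, hC⟩ := ih _ hssub ⟨a, ha, .refl⟩ fun v hv => by
    rw [deg_component hv]; exact h2 v (VSet_mono (component_subset X a) hv)
  exact ⟨C, hCY.trans (component_subset X a), hC⟩

lemma exists_isCycle_subset (hne : X.Nonempty) (hX : G.EvenDeg X) : ∃ C ⊆ X, G.IsCycle C :=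
  exists_isCycle_subset_of_two_le_deg hne fun v hv => by
    have := one_le_deg hv
    obtain ⟨k, hk⟩ := hX v
    omega

lemma IsCycle.not_disjoint_of_subset_symmDiff {C₁ C₂ D : Set E} (hC₁ : G.IsCycle C₁)
    (hD : G.IsCycle D) (hDC : D ⊆ C₁ ∆ C₂) (hC₁₂ : ¬ Disjoint C₁ C₂) : ¬ Disjoint D C₂ := by
  intro hdisj
  have hDC₁ : D ⊆ C₁ := fun x hx =>
    ((mem_symmDiff.1 (hDC hx)).resolve_right fun h => disjoint_left.1 hdisj hx h.1).1
  exact hC₁₂ (hC₁.eq_of_evenDeg_subset hDC₁ hD.evenDeg hD.2.1 ▸ hdisj)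

end Finite

end MultiGraph

section SignParity

variable {E : Type*} {S T X Y : Set E}

noncomputable def signParity (S X : Set E) : ZMod 2 := ((X ∩ S).ncard : ZMod 2)

lemma signParity_eq_zero_iff : signParity S X = 0 ↔ Even (X ∩ S).ncard :=
  ZMod.natCast_eq_zero_iff_even

@[simp] lemma signParity_empty : signParity S (∅ : Set E) = 0 := by
  simp [signParity]

lemma signParity_singleton (e : E) (X : Set E) [Decidable (e ∈ X)] :
    signParity {e} X = if e ∈ X then 1 else 0 := by
  split_ifs with he <;> simp [signParity, he]

variable [Finite E]

lemma signParity_symmDiff (S X Y : Set E) :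
    signParity S (X ∆ Y) = signParity S X + signParity S Y := by
  rw [signParity, inter_symmDiff_distrib_right, natCast_ncard_symmDiff]; rfl

lemma signParity_symmDiff_left (S T X : Set E) :
    signParity (S ∆ T) X = signParity S X + signParity T X := by
  rw [signParity, inter_symmDiff_distrib_left, natCast_ncard_symmDiff]; rfl

lemma signParity_union (S : Set E) (h : Disjoint X Y) :
    signParity S (X ∪ Y) = signParity S X + signParity S Y := by
  rw [← signParity_symmDiff, h.symmDiff_eq_sup]; rfl

end SignParity

namespace BiasedGraph

variable {V E : Type*} {Ω : BiasedGraph V E} {A C C₁ C₂ D X : Set E} {S S' : Set E} {e : E}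

variable (Ω) in
noncomputable def bias (C : Set E) : ZMod 2 := by
  classical exact if C ∈ Ω.Balanced then 0 else 1

lemma bias_eq_signParity_iff [Finite E] :
    Ω.bias C = signParity S C ↔ (C ∈ Ω.Balanced ↔ Even (C ∩ S).ncard) := by
  have key : ∀ a b : ZMod 2, a = b ↔ (a = 0 ↔ b = 0) := by decide
  rw [key, signParity_eq_zero_iff, bias]
  split_ifs with h <;> simp [h]

variable (Ω) in
def IsSignatureOn (A S : Set E) : Prop :=
  ∀ C ⊆ A, Ω.toMultiGraph.IsCycle C → Ω.bias C = signParity S C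

lemma not_isContraTheta_of_forall_bias_eq_signParity [Finite E]
    (hS : ∀ C, Ω.toMultiGraph.IsCycle C → Ω.bias C = signParity S C) (T : Set E) :
    ¬ Ω.IsContraTheta T := by
  rintro ⟨C₁, C₂, C₃, hC₁, hC₂, hC₃, rfl, -⟩
  have hodd : ∀ {C}, Ω.IsUnbalancedCycle C → signParity S C = 1 := fun hC => by
    rw [← hS _ hC.1, bias, if_neg hC.2]
  have h := signParity_symmDiff S C₁ C₂
  rw [hodd hC₁, hodd hC₂, hodd hC₃] at h
  exact absurd h (by decide)

lemma bias_symmDiff (hθ : Ω.ThetaProperty) (hT : ∀ T, ¬ Ω.IsContraTheta T)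
    (hC : Ω.toMultiGraph.IsCycle C) (hD : Ω.toMultiGraph.IsCycle D)
    (hCD : Ω.toMultiGraph.IsCycle (C ∆ D)) : Ω.bias (C ∆ D) = Ω.bias C + Ω.bias D := by
  have hDC : D = C ∆ (C ∆ D) := (symmDiff_symmDiff_cancel_left C D).symm
  have hCD' : C = D ∆ (C ∆ D) := by rw [symmDiff_comm C D, symmDiff_symmDiff_cancel_left]
  have hcontra : C ∉ Ω.Balanced → D ∉ Ω.Balanced → C ∆ D ∈ Ω.Balanced := fun hC' hD' => by
    by_contra hCD''
    exact hT _ ⟨C, D, C ∆ D, ⟨hC, hC'⟩, ⟨hD, hD'⟩, ⟨hCD, hCD''⟩, rfl, rfl⟩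
  have hCD_bal := hθ.2 C D _ hC hD hCD rfl
  have hD_bal := hθ.2 C _ D hC hCD hD hDC
  have hC_bal := hθ.2 D _ C hD hCD hC hCD'
  unfold bias
  split_ifs <;> first | rfl | tauto

section Finite

variable [Finite E]

lemma signParity_eq_of_isSignatureOn {A₁ A₂ S₁ S₂ : Set E} (h₁ : Ω.IsSignatureOn A₁ S₁)
    (h₂ : Ω.IsSignatureOn A₂ S₂) (hX : Ω.toMultiGraph.EvenDeg X) (hX₁ : X ⊆ A₁)
    (hX₂ : X ⊆ A₂) : signParity S₁ X = signParity S₂ X := by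
  induction X using WellFoundedLT.induction with
  | _ X ih =>
  rcases X.eq_empty_or_nonempty with rfl | hne
  · simp
  obtain ⟨D, hDX, hD⟩ := MultiGraph.exists_isCycle_subset hne hX
  have hsplit : X = D ∪ X \ D := (union_sdiff_cancel hDX).symm
  rw [hsplit, signParity_union _ disjoint_sdiff_right, signParity_union _ disjoint_sdiff_right,
    ← h₁ D (hDX.trans hX₁) hD, ← h₂ D (hDX.trans hX₂) hD,
    ih (X \ D) (sdiff_ssubset_left_iff.2 (by rw [inter_eq_right.2 hDX]; exact hD.2.1))
      (hX.sdiff hD.evenDeg hDX) (sdiff_subset.trans hX₁) (sdiff_subset.trans hX₂)]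

lemma bias_add_bias_eq_signParity_of_ssubset (ih : ∀ B ⊂ A, ∃ S, Ω.IsSignatureOn B S)
    (hS' : Ω.IsSignatureOn (A \ {e}) S') (hC₁ : Ω.toMultiGraph.IsCycle C₁)
    (hC₂ : Ω.toMultiGraph.IsCycle C₂) (hC₁A : C₁ ⊆ A) (hC₂A : C₂ ⊆ A) (he₁ : e ∈ C₁)
    (he₂ : e ∈ C₂) (hD : Ω.toMultiGraph.IsCycle D) (hDX : D ⊂ C₁ ∆ C₂) :
    Ω.bias C₁ + Ω.bias C₂ = signParity S' (C₁ ∆ C₂) := by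
  have hXA : C₁ ∆ C₂ ⊆ A \ {e} := symmDiff_subset_sdiff_singleton hC₁A hC₂A he₁ he₂
  have hX := hC₁.evenDeg.symmDiff hC₂.evenDeg
  have hDX' : D ⊆ C₁ ∆ C₂ := hDX.subset
  set U := C₁ ∆ C₂ \ D with hU
  obtain ⟨D', hD'U, hD'⟩ := MultiGraph.exists_isCycle_subset
    (sdiff_nonempty.2 hDX.not_subset) (hX.sdiff hD.evenDeg hDX')
  have hmeet : ¬ Disjoint C₁ C₂ := not_disjoint_iff.2 ⟨e, he₁, he₂⟩
  obtain ⟨g, hgD, hgC₁⟩ := not_disjoint_iff.1 (hC₂.not_disjoint_of_subset_symmDiff hD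
    (symmDiff_comm C₁ C₂ ▸ hDX') fun h => hmeet h.symm)
  obtain ⟨h, hhD', hhC₂⟩ := not_disjoint_iff.1 (hC₁.not_disjoint_of_subset_symmDiff hD'
    (hD'U.trans sdiff_subset) hmeet)
  have hgC₂ : g ∉ C₂ := fun hg => by
    have := hDX' hgD; simp [mem_symmDiff, hgC₁, hg] at this
  have hhC₁ : h ∉ C₁ := fun hh => by
    have := (hD'U hhD').1; simp [mem_symmDiff, hhC₂, hh] at this
  have hhD : h ∉ D := (hD'U hhD').2
  have hDA : D ⊆ A := hDX'.trans (hXA.trans sdiff_subset)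
  obtain ⟨Sg, hSg⟩ := ih (A \ {g}) (sdiff_singleton_ssubset.2 (hC₁A hgC₁))
  obtain ⟨Sh, hSh⟩ := ih (A \ {h}) (sdiff_singleton_ssubset.2 (hC₂A hhC₂))
  have hswap : C₁ ∆ D = C₂ ∆ U := by
    ext x; have := @hDX' x; simp only [hU, mem_symmDiff, mem_sdiff] at *; tauto
  have hC₁D : Ω.bias C₁ + Ω.bias D = signParity Sg (C₂ ∆ U) := by
    rw [hSh C₁ (subset_sdiff_singleton hC₁A hhC₁) hC₁, hSh D (subset_sdiff_singleton hDA hhD) hD,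
      ← signParity_symmDiff, ← hswap]
    refine signParity_eq_of_isSignatureOn hSh hSg (hC₁.evenDeg.symmDiff hD.evenDeg) ?_ ?_
    · exact subset_sdiff_singleton (symmDiff_subset_union.trans (union_subset hC₁A hDA))
        fun hx => (symmDiff_subset_union hx).elim hhC₁ hhD
    · exact symmDiff_subset_sdiff_singleton hC₁A hDA hgC₁ hgD
  have hUsign : signParity Sg U = signParity S' U :=
    signParity_eq_of_isSignatureOn hSg hS' (hX.sdiff hD.evenDeg hDX')
      (subset_sdiff_singleton (sdiff_subset.trans (hXA.trans sdiff_subset)) fun hg => hg.2 hgD)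
      (sdiff_subset.trans hXA)
  have hXsign : signParity S' (C₁ ∆ C₂) = Ω.bias D + signParity S' U := by
    conv_lhs => rw [← union_sdiff_cancel hDX']
    rw [signParity_union _ disjoint_sdiff_right, hS' D (hDX'.trans hXA) hD]
  have hC₂sign := hSg C₂ (subset_sdiff_singleton hC₂A hgC₂) hC₂
  have hsplit := signParity_symmDiff Sg C₂ U
  grind

lemma bias_add_bias_eq_signParity (hθ : Ω.ThetaProperty) (hT : ∀ T, ¬ Ω.IsContraTheta T)
    (ih : ∀ B ⊂ A, ∃ S, Ω.IsSignatureOn B S) (hS' : Ω.IsSignatureOn (A \ {e}) S')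
    (hC₁ : Ω.toMultiGraph.IsCycle C₁) (hC₂ : Ω.toMultiGraph.IsCycle C₂) (hC₁A : C₁ ⊆ A)
    (hC₂A : C₂ ⊆ A) (he₁ : e ∈ C₁) (he₂ : e ∈ C₂) :
    Ω.bias C₁ + Ω.bias C₂ = signParity S' (C₁ ∆ C₂) := by
  rcases (C₁ ∆ C₂).eq_empty_or_nonempty with hempty | hne
  · rw [symmDiff_eq_empty.1 hempty, symmDiff_self, bot_eq_empty, signParity_empty]
    exact CharTwo.add_self_eq_zero _
  obtain ⟨D, hDX, hD⟩ :=
    MultiGraph.exists_isCycle_subset hne (hC₁.evenDeg.symmDiff hC₂.evenDeg)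
  obtain rfl | hDX := hDX.eq_or_ssubset
  · rw [← bias_symmDiff hθ hT hC₁ hC₂ hD,
      hS' _ (symmDiff_subset_sdiff_singleton hC₁A hC₂A he₁ he₂) hD]
  · exact bias_add_bias_eq_signParity_of_ssubset ih hS' hC₁ hC₂ hC₁A hC₂A he₁ he₂ hD hDX

lemma IsSignatureOn.exists_of_sdiff_singleton (hS' : Ω.IsSignatureOn (A \ {e}) S')
    (hpair : ∀ C₁ C₂, Ω.toMultiGraph.IsCycle C₁ → Ω.toMultiGraph.IsCycle C₂ → C₁ ⊆ A →
      C₂ ⊆ A → e ∈ C₁ → e ∈ C₂ → Ω.bias C₁ + Ω.bias C₂ = signParity S' (C₁ ∆ C₂)) :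
    ∃ S, Ω.IsSignatureOn A S := by
  classical
  by_cases hcyc : ∃ C₀ ⊆ A, Ω.toMultiGraph.IsCycle C₀ ∧ e ∈ C₀
  swap
  · push Not at hcyc
    exact ⟨S', fun C hCA hC => hS' C (subset_sdiff_singleton hCA (hcyc C hCA hC)) hC⟩
  obtain ⟨C₀, hC₀A, hC₀, heC₀⟩ := hcyc
  obtain ⟨T, hT⟩ : ∃ T, ∀ C, signParity T C =
      if e ∈ C then Ω.bias C₀ + signParity S' C₀ else 0 := by
    rcases (by decide : ∀ t : ZMod 2, t = 0 ∨ t = 1) (Ω.bias C₀ + signParity S' C₀) with ht | ht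
    · exact ⟨∅, fun C => by rw [ht, ite_self]; simp [signParity]⟩
    · exact ⟨{e}, fun C => by rw [signParity_singleton, ht]⟩
  refine ⟨S' ∆ T, fun C hCA hC => ?_⟩
  rw [signParity_symmDiff_left, hT]
  split_ifs with heC
  · have h := hpair C C₀ hC hC₀ hCA hC₀A heC heC₀
    rw [signParity_symmDiff] at h
    grind
  · rw [add_zero]
    exact hS' C (subset_sdiff_singleton hCA heC) hC

lemma exists_isSignatureOn (hθ : Ω.ThetaProperty) (hT : ∀ T, ¬ Ω.IsContraTheta T)
    (A : Set E) : ∃ S, Ω.IsSignatureOn A S := by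
  induction A using WellFoundedLT.induction with
  | _ A ih =>
  rcases A.eq_empty_or_nonempty with rfl | ⟨e, he⟩
  · exact ⟨∅, fun C hC hCyc => (hCyc.2.1.ne_empty (subset_empty_iff.1 hC)).elim⟩
  obtain ⟨S', hS'⟩ := ih (A \ {e}) (sdiff_singleton_ssubset.2 he)
  exact hS'.exists_of_sdiff_singleton fun _ _ => bias_add_bias_eq_signParity hθ hT ih hS'

end Finite

end BiasedGraph

theorem stmt_4_general {V E : Type*} [Finite E] (Ω : BiasedGraph V E)
    (hθ : Ω.ThetaProperty) :
    (∃ S : Set E, ∀ C : Set E, Ω.toMultiGraph.IsCycle C →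
        (C ∈ Ω.Balanced ↔ Even (C ∩ S).ncard)) ↔
      ¬ ∃ T : Set E, Ω.IsContraTheta T := by
  simp only [← BiasedGraph.bias_eq_signParity_iff, not_exists]
  refine ⟨fun ⟨S, hS⟩ => BiasedGraph.not_isContraTheta_of_forall_bias_eq_signParity hS,
    fun hT => ?_⟩
  obtain ⟨S, hS⟩ := BiasedGraph.exists_isSignatureOn hθ hT univ
  exact ⟨S, fun C hC => hS C (subset_univ C) hC⟩

theorem stmt_4 {V E : Type*} [Finite V] [Finite E] (Ω : BiasedGraph V E)
    (hθ : Ω.ThetaProperty) :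
    (∃ S : Set E, ∀ C : Set E, Ω.toMultiGraph.IsCycle C →
        (C ∈ Ω.Balanced ↔ Even (C ∩ S).ncard)) ↔
      ¬ ∃ T : Set E, Ω.IsContraTheta T :=
  stmt_4_general Ω hθ
end

section
/- Let v be a balancing vertex of a biased graph Ω. Define a relation ∼ on the links incident to v by e ∼ f iff e = f or some balanced cycle contains both e and f. Then ∼ is an equivalence relation, and a cycle of Ω through v is balanced if and only if its two edges at v lie in the same equivalence class. -/
open Set

/-! ### Biased graph core -/

universe u v

/-!
Since `v` is balancing, the theta property lets a balanced cycle `D` through two links `e`, `f`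
at `v` be rerouted towards any other cycle `C` through `e` and `f`. An ear `P` of `C` with
respect to `D` misses `v` and cuts `D` into an arc `A₁` containing `e`, `f` and an arc `A₂`
avoiding `v`. The cycle `P ∪ A₂` avoids `v`, so it is balanced, hence by the theta property so
is `P ∪ A₁`, which is closer to `C`; iterating, `C` itself is balanced.

For transitivity, let `D₁ ∋ e, f` and `D₂ ∋ f, g` be balanced. The path `Q` that follows `D₂` from
`v` along `g` until it first meets `D₁` cuts `D₁` into an arc through `e` and an arc through `f`.
`Q` plus the arc through `f` shares `f` and `g` with `D₂`, so it is balanced by the first part,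
and by the theta property so is `Q` plus the arc through `e`.
-/

namespace MultiGraph

variable {V : Type u} {E : Type v} {G : MultiGraph V E}

open List

def Joins (G : MultiGraph V E) (e : E) (a b : V) : Prop :=
  (G.fst e = a ∧ G.snd e = b) ∨ (G.fst e = b ∧ G.snd e = a)

lemma Joins.symm {e : E} {a b : V} (h : G.Joins e a b) : G.Joins e b a := Or.symm h

lemma Joins.inc_iff {e : E} {a b w : V} (h : G.Joins e a b) : G.Inc w e ↔ w = a ∨ w = b := by
  rcases h with ⟨h₁, h₂⟩ | ⟨h₁, h₂⟩ <;> simp only [Inc, h₁, h₂] <;> tauto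

lemma Joins.ne {e : E} {a b : V} (h : G.Joins e a b) (he : G.IsLink e) : a ≠ b := by
  rintro rfl
  rcases h with ⟨h₁, h₂⟩ | ⟨h₁, h₂⟩ <;> exact he (h₁.trans h₂.symm)

lemma exists_joins {e : E} {a : V} (ha : G.Inc a e) : ∃ b, G.Joins e a b := by
  rcases ha with h | h
  · exact ⟨G.snd e, Or.inl ⟨h, rfl⟩⟩
  · exact ⟨G.fst e, Or.inr ⟨rfl, h⟩⟩

lemma vSet_union (X Y : Set E) : G.VSet (X ∪ Y) = G.VSet X ∪ G.VSet Y := by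
  ext w
  simp only [VSet, Set.mem_union, Set.mem_ofPred_eq, or_and_right, exists_or]

lemma vSet_mono {X Y : Set E} (h : X ⊆ Y) : G.VSet X ⊆ G.VSet Y :=
  fun _ ⟨e, he, hw⟩ => ⟨e, h he, hw⟩

def incSet (G : MultiGraph V E) (X : Set E) (w : V) : Set E := {e ∈ X | G.Inc w e}

lemma deg_eq_ncard_incSet {X : Set E} (hX : X.Finite) (hl : ∀ e ∈ X, G.IsLink e) (w : V) :
    G.deg X w = (G.incSet X w).ncard := by
  have hunion : G.incSet X w = {e ∈ X | G.fst e = w} ∪ {e ∈ X | G.snd e = w} := by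
    ext e
    simp only [incSet, Inc, Set.mem_union, Set.mem_ofPred_eq]
    tauto
  have hdisj : Disjoint {e ∈ X | G.fst e = w} {e ∈ X | G.snd e = w} :=
    Set.disjoint_left.mpr fun e ⟨he, h₁⟩ ⟨_, h₂⟩ => hl e he (h₁.trans h₂.symm)
  rw [hunion, Set.ncard_union_eq hdisj (hX.sep _) (hX.sep _), deg]

lemma deg_union_s6 {X Y : Set E} (hXY : Disjoint X Y) (hX : X.Finite) (hY : Y.Finite) (w : V) :
    G.deg (X ∪ Y) w = G.deg X w + G.deg Y w := by
  have hsep : ∀ p : E → Prop, {e ∈ X ∪ Y | p e} = {e ∈ X | p e} ∪ {e ∈ Y | p e} :=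
    fun _ => Set.sep_union
  have hdisj : ∀ p : E → Prop, Disjoint {e ∈ X | p e} {e ∈ Y | p e} :=
    fun _ => hXY.mono (Set.sep_subset _ _) (Set.sep_subset _ _)
  simp only [deg, hsep, Set.ncard_union_eq (hdisj _) (hX.sep _) (hY.sep _)]
  ring

lemma Joins.deg_singleton [DecidableEq V] {e : E} {a b : V} (h : G.Joins e a b) (w : V) :
    G.deg {e} w = [a].count w + [b].count w := by
  have hsep : ∀ φ : E → V, {c ∈ ({e} : Set E) | φ c = w}.ncard = [φ e].count w := by
    intro φ
    by_cases hφ : φ e = w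
    · rw [Set.sep_eq_self_iff_mem_true.mpr (by simpa using hφ), Set.ncard_singleton]
      simp [hφ]
    · rw [Set.sep_eq_empty_iff_mem_false.mpr (by simpa using hφ), Set.ncard_empty]
      simp [hφ]
  rw [deg, hsep, hsep]
  rcases h with ⟨h₁, h₂⟩ | ⟨h₁, h₂⟩ <;> rw [h₁, h₂]
  omega

/-- A walk from `u`, recorded as its list of steps `(edge, vertex reached)`. -/
def IsWalk (G : MultiGraph V E) : V → List (E × V) → Prop
  | _, [] => True
  | u, st :: L => G.Joins st.1 u st.2 ∧ G.IsWalk st.2 L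

def walkEnd : V → List (E × V) → V
  | u, [] => u
  | _, st :: L => walkEnd st.2 L

def walkEdges (L : List (E × V)) : Set E := {e | e ∈ L.map Prod.fst}

@[simp] lemma isWalk_nil (u : V) : G.IsWalk u [] := trivial

@[simp] lemma isWalk_cons {u : V} {st : E × V} {L : List (E × V)} :
    G.IsWalk u (st :: L) ↔ G.Joins st.1 u st.2 ∧ G.IsWalk st.2 L := Iff.rfl

@[simp] lemma walkEnd_nil (u : V) : walkEnd (E := E) u [] = u := rfl

@[simp] lemma walkEnd_cons (u : V) (st : E × V) (L : List (E × V)) :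
    walkEnd u (st :: L) = walkEnd st.2 L := rfl

@[simp] lemma mem_walkEdges {e : E} {L : List (E × V)} :
    e ∈ walkEdges L ↔ e ∈ L.map Prod.fst := Iff.rfl

lemma walkEnd_append (u : V) (L₁ L₂ : List (E × V)) :
    walkEnd u (L₁ ++ L₂) = walkEnd (walkEnd u L₁) L₂ := by
  induction L₁ generalizing u with
  | nil => rfl
  | cons st L ih => exact ih st.2

lemma isWalk_append {u : V} {L₁ L₂ : List (E × V)} :
    G.IsWalk u (L₁ ++ L₂) ↔ G.IsWalk u L₁ ∧ G.IsWalk (walkEnd u L₁) L₂ := by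
  induction L₁ generalizing u with
  | nil => simp
  | cons st L ih => simp [ih, and_assoc]

lemma walkEdges_append (L₁ L₂ : List (E × V)) :
    walkEdges (L₁ ++ L₂) = walkEdges L₁ ∪ walkEdges L₂ := by
  ext; simp

lemma walkEdges_cons (st : E × V) (L : List (E × V)) :
    walkEdges (st :: L) = {st.1} ∪ walkEdges L := by
  ext; simp

lemma walkEdges_finite (L : List (E × V)) : (walkEdges L).Finite :=
  (L.map Prod.fst).finite_toSet

lemma walkEnd_mem (u : V) (L : List (E × V)) : walkEnd u L ∈ u :: L.map Prod.snd := by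
  induction L generalizing u with
  | nil => simp
  | cons st L ih => exact mem_cons_of_mem _ (ih st.2)

lemma walkEnd_mem_map_snd (u : V) {L : List (E × V)} (hL : L ≠ []) :
    walkEnd u L ∈ L.map Prod.snd := by
  obtain ⟨st, L, rfl⟩ := exists_cons_of_ne_nil hL
  exact walkEnd_mem st.2 L

lemma IsWalk.mem_vSet_walkEdges {u w : V} {L : List (E × V)} (h : G.IsWalk u L) (hL : L ≠ []) :
    w ∈ G.VSet (walkEdges L) ↔ w ∈ u :: L.map Prod.snd := by
  induction L generalizing u with
  | nil => exact absurd rfl hL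
  | cons st L ih =>
    have hst : w ∈ G.VSet {st.1} ↔ w = u ∨ w = st.2 := by
      simp [VSet, h.1.inc_iff]
    rw [walkEdges_cons, vSet_union, Set.mem_union, hst]
    rcases eq_or_ne L [] with rfl | hL'
    · simp [VSet, walkEdges]
    · rw [ih h.2 hL']
      simp only [map_cons, mem_cons]
      tauto

/-- Every step of the walk adds one to the degree of each of its two ends. -/
lemma IsWalk.deg_walkEdges [DecidableEq V] {u : V} {L : List (E × V)} (h : G.IsWalk u L)
    (hL : (L.map Prod.fst).Nodup) (w : V) :
    G.deg (walkEdges L) w + [walkEnd u L].count w =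
      (u :: L.map Prod.snd).count w + (L.map Prod.snd).count w := by
  induction L generalizing u with
  | nil => simp [walkEdges, deg]
  | cons st L ih =>
    rw [map_cons, nodup_cons] at hL
    have hdisj : Disjoint {st.1} (walkEdges L) := Set.disjoint_singleton_left.mpr hL.1
    rw [walkEdges_cons, deg_union_s6 hdisj (Set.finite_singleton _) (walkEdges_finite L),
      h.1.deg_singleton, walkEnd_cons]
    have := ih h.2 hL.2
    simp only [map_cons, count_cons, count_nil] at this ⊢
    omega

lemma IsWalk.reflTransGen_edgeAdj {u : V} {st : E × V} {L : List (E × V)} {X : Set E}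
    (h : G.IsWalk u (st :: L)) (hX : walkEdges (st :: L) ⊆ X) {e : E}
    (he : e ∈ walkEdges (st :: L)) : Relation.ReflTransGen (G.EdgeAdj X) st.1 e := by
  induction L generalizing u st with
  | nil =>
    obtain rfl : e = st.1 := by simpa using he
    exact .refl
  | cons st' L ih =>
    rw [walkEdges_cons, Set.mem_union, Set.mem_singleton_iff] at he
    rcases he with rfl | he
    · exact .refl
    have hadj : G.EdgeAdj X st.1 st'.1 :=
      ⟨hX (by simp), hX (by simp), st.2, h.1.inc_iff.mpr (Or.inr rfl),
        h.2.1.inc_iff.mpr (Or.inl rfl)⟩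
    exact .head hadj (ih h.2 (fun c hc => hX (by simp_all)) he)

instance instSymmEdgeAdj (X : Set E) : Std.Symm (G.EdgeAdj X) :=
  ⟨fun _ _ ⟨he, hf, w, h₁, h₂⟩ => ⟨hf, he, w, h₂, h₁⟩⟩

lemma IsWalk.connectedOn {u : V} {L : List (E × V)} (h : G.IsWalk u L) :
    G.ConnectedOn (walkEdges L) := by
  intro e f he hf
  cases L with
  | nil => simp [walkEdges] at he
  | cons st L =>
  exact (Relation.ReflTransGen.stdSymm.symm _ _ (h.reflTransGen_edgeAdj le_rfl he)).trans
    (h.reflTransGen_edgeAdj le_rfl hf)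

structure IsPathWalk (G : MultiGraph V E) (u : V) (L : List (E × V)) : Prop where
  isWalk : G.IsWalk u L
  nodup_verts : (u :: L.map Prod.snd).Nodup
  nodup_edges : (L.map Prod.fst).Nodup

structure IsCycleWalk (G : MultiGraph V E) (u : V) (L : List (E × V)) : Prop where
  isWalk : G.IsWalk u L
  ne_nil : L ≠ []
  walkEnd_eq : walkEnd u L = u
  nodup_verts : (L.map Prod.snd).Nodup
  nodup_edges : (L.map Prod.fst).Nodup

lemma IsPathWalk.ne_walkEnd {u : V} {L : List (E × V)} (h : G.IsPathWalk u L) (hL : L ≠ []) :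
    u ≠ walkEnd u L :=
  fun hu => (nodup_cons.mp h.nodup_verts).1 (hu ▸ walkEnd_mem_map_snd u hL)

lemma IsPathWalk.of_append_left {u : V} {L₁ L₂ : List (E × V)}
    (h : G.IsPathWalk u (L₁ ++ L₂)) : G.IsPathWalk u L₁ := by
  obtain ⟨hw, hv, he⟩ := h
  refine ⟨(isWalk_append.mp hw).1, ?_, ?_⟩
  · rw [map_append, ← cons_append] at hv
    exact hv.sublist (sublist_append_left _ _)
  · rw [map_append] at he
    exact he.sublist (sublist_append_left _ _)

lemma IsPathWalk.of_append_right {u : V} {L₁ L₂ : List (E × V)}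
    (h : G.IsPathWalk u (L₁ ++ L₂)) : G.IsPathWalk (walkEnd u L₁) L₂ := by
  obtain ⟨hw, hv, he⟩ := h
  rw [map_append, ← cons_append] at hv
  rw [map_append] at he
  refine ⟨(isWalk_append.mp hw).2, nodup_cons.mpr ⟨?_, hv.sublist (sublist_append_right _ _)⟩,
    he.sublist (sublist_append_right _ _)⟩
  exact fun hm => disjoint_of_nodup_append hv (walkEnd_mem u L₁) hm

lemma IsPathWalk.tail {u : V} {st : E × V} {L : List (E × V)} (h : G.IsPathWalk u (st :: L)) :
    G.IsPathWalk st.2 L :=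
  h.of_append_right (L₁ := [st])

lemma IsPathWalk.concat {u y : V} {e : E} {L : List (E × V)} (h : G.IsPathWalk u L)
    (he : G.Joins e (walkEnd u L) y) (hy : y ∉ u :: L.map Prod.snd) (heL : e ∉ walkEdges L) :
    G.IsPathWalk u (L ++ [(e, y)]) := by
  obtain ⟨hw, hv, hE⟩ := h
  refine ⟨isWalk_append.mpr ⟨hw, he, trivial⟩, ?_, ?_⟩
  · rw [map_append, ← cons_append]
    exact hv.append (nodup_singleton y) (by simpa using hy)
  · rw [map_append]
    exact hE.append (nodup_singleton e) (by simpa using heL)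

lemma IsPathWalk.isCycleWalk_concat {u : V} {e : E} {L : List (E × V)} (h : G.IsPathWalk u L)
    (he : G.Joins e (walkEnd u L) u) (heL : e ∉ walkEdges L) :
    G.IsCycleWalk u (L ++ [(e, u)]) := by
  obtain ⟨hw, hv, hE⟩ := h
  refine ⟨isWalk_append.mpr ⟨hw, he, trivial⟩, by simp, by simp [walkEnd_append], ?_, ?_⟩
  · rw [map_append]
    exact (nodup_cons.mp hv).2.append (nodup_singleton u) (by simpa using (nodup_cons.mp hv).1)
  · rw [map_append]
    exact hE.append (nodup_singleton e) (by simpa using heL)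

lemma IsCycleWalk.tail {u : V} {st : E × V} {L : List (E × V)} (h : G.IsCycleWalk u (st :: L)) :
    G.IsPathWalk st.2 L ∧ walkEnd st.2 L = u ∧ st.1 ∉ walkEdges L := by
  obtain ⟨hw, -, hend, hv, hE⟩ := h
  rw [map_cons, nodup_cons] at hE
  exact ⟨⟨hw.2, hv, hE.2⟩, hend, hE.1⟩

lemma exists_walkEnd_eq {u b : V} {L : List (E × V)} (hb : b ∈ u :: L.map Prod.snd) :
    ∃ L₁ L₂, L = L₁ ++ L₂ ∧ walkEnd u L₁ = b := by
  induction L generalizing u with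
  | nil => exact ⟨[], [], rfl, (mem_singleton.mp hb).symm⟩
  | cons st L ih =>
    rcases mem_cons.mp hb with rfl | hb
    · exact ⟨[], st :: L, rfl, rfl⟩
    · obtain ⟨L₁, L₂, rfl, hL₁⟩ := ih hb
      exact ⟨st :: L₁, L₂, rfl, hL₁⟩

lemma IsCycleWalk.split {u b : V} {st : E × V} {L : List (E × V)}
    (h : G.IsCycleWalk u (st :: L)) (hb : b ∈ (st :: L).map Prod.snd) (hbu : b ≠ u) :
    ∃ L₁ L₂, L = L₁ ++ L₂ ∧ G.IsPathWalk u (st :: L₁) ∧ G.IsPathWalk b L₂ ∧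
      walkEnd u (st :: L₁) = b ∧ walkEnd b L₂ = u := by
  obtain ⟨hP, hend, hst⟩ := h.tail
  obtain ⟨L₁, L₂, rfl, hb₁⟩ := exists_walkEnd_eq hb
  have hP₁ := hP.of_append_left
  have hP₂ := hP.of_append_right
  rw [hb₁] at hP₂
  rw [walkEnd_append, hb₁] at hend
  refine ⟨L₁, L₂, rfl, ⟨⟨h.isWalk.1, hP₁.isWalk⟩, nodup_cons.mpr ⟨fun hu => ?_, hP₁.nodup_verts⟩,
    ?_⟩, hP₂, hb₁, hend⟩
  · have hL₂ : L₂ ≠ [] := by rintro rfl; exact hbu hend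
    have hv := hP.nodup_verts
    rw [map_append, ← cons_append] at hv
    exact disjoint_of_nodup_append hv hu (hend ▸ walkEnd_mem_map_snd b hL₂)
  · rw [map_cons, nodup_cons]
    exact ⟨fun h₁ => hst (by simp_all), hP₁.nodup_edges⟩

lemma IsCycleWalk.isCycle {u : V} {L : List (E × V)} (h : G.IsCycleWalk u L) :
    G.IsCycle (walkEdges L) := by
  classical
  obtain ⟨hw, hL, hend, hv, hE⟩ := h
  obtain ⟨st, L', rfl⟩ := exists_cons_of_ne_nil hL
  refine ⟨walkEdges_finite _, ⟨st.1, by simp⟩, hw.connectedOn, fun w hw' => ?_⟩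
  have hwL : w ∈ (st :: L').map Prod.snd := by
    rcases mem_cons.mp ((hw.mem_vSet_walkEdges hL).mp hw') with rfl | h
    · exact hend ▸ walkEnd_mem_map_snd w hL
    · exact h
  have hdeg := hw.deg_walkEdges hE w
  simp only [hend, count_cons, count_nil, count_eq_one_of_mem hv hwL] at hdeg
  omega

lemma IsPathWalk.deg_walkEnd {u : V} {L : List (E × V)} (h : G.IsPathWalk u L) (hL : L ≠ []) :
    G.deg (walkEdges L) (walkEnd u L) = 1 := by
  classical
  have hdeg := h.isWalk.deg_walkEdges h.nodup_edges (walkEnd u L)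
  have hmem := walkEnd_mem_map_snd u hL
  rw [count_eq_one_of_mem h.nodup_verts (mem_cons_of_mem _ hmem),
    count_eq_one_of_mem (nodup_cons.mp h.nodup_verts).2 hmem, count_singleton_self] at hdeg
  omega

lemma IsPathWalk.deg_of_ne_walkEnd {u w : V} {L : List (E × V)} (h : G.IsPathWalk u L)
    (hw : w ∈ L.map Prod.snd) (hne : w ≠ walkEnd u L) : G.deg (walkEdges L) w = 2 := by
  classical
  have hdeg := h.isWalk.deg_walkEdges h.nodup_edges w
  rw [count_eq_one_of_mem h.nodup_verts (mem_cons_of_mem _ hw),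
    count_eq_one_of_mem (nodup_cons.mp h.nodup_verts).2 hw] at hdeg
  simp only [count_singleton, beq_iff_eq, if_neg hne.symm] at hdeg
  omega

lemma IsPathWalk.isCycle_union {x y : V} {L₁ L₂ : List (E × V)} (h₁ : G.IsPathWalk x L₁)
    (h₂ : G.IsPathWalk y L₂) (he₁ : walkEnd x L₁ = y) (he₂ : walkEnd y L₂ = x) (hxy : x ≠ y)
    (hE : Disjoint (walkEdges L₁) (walkEdges L₂))
    (hV : G.VSet (walkEdges L₁) ∩ G.VSet (walkEdges L₂) ⊆ {x, y}) :
    G.IsCycle (walkEdges L₁ ∪ walkEdges L₂) := by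
  have hL₁ : L₁ ≠ [] := by rintro rfl; exact hxy he₁
  have hL₂ : L₂ ≠ [] := by rintro rfl; exact hxy he₂.symm
  rw [← walkEdges_append]
  refine IsCycleWalk.isCycle ⟨isWalk_append.mpr ⟨h₁.isWalk, he₁ ▸ h₂.isWalk⟩, by simp [hL₁],
    by rw [walkEnd_append, he₁, he₂], ?_, ?_⟩
  · rw [map_append]
    refine (nodup_cons.mp h₁.nodup_verts).2.append (nodup_cons.mp h₂.nodup_verts).2
      fun a ha₁ ha₂ => ?_
    have ha : a ∈ ({x, y} : Set V) :=
      hV ⟨(h₁.isWalk.mem_vSet_walkEdges hL₁).mpr (mem_cons_of_mem _ ha₁),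
        (h₂.isWalk.mem_vSet_walkEdges hL₂).mpr (mem_cons_of_mem _ ha₂)⟩
    rcases ha with rfl | rfl
    · exact (nodup_cons.mp h₁.nodup_verts).1 ha₁
    · exact (nodup_cons.mp h₂.nodup_verts).1 ha₂
  · rw [map_append]
    exact h₁.nodup_edges.append h₂.nodup_edges fun a ha₁ ha₂ => Set.disjoint_left.mp hE ha₁ ha₂

def walkRev : V → List (E × V) → List (E × V)
  | _, [] => []
  | u, st :: L => walkRev st.2 L ++ [(st.1, u)]

lemma map_fst_walkRev (u : V) (L : List (E × V)) :
    (walkRev u L).map Prod.fst = (L.map Prod.fst).reverse := by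
  induction L generalizing u with
  | nil => rfl
  | cons st L ih => simp [walkRev, ih]

lemma walkEdges_walkRev (u : V) (L : List (E × V)) : walkEdges (walkRev u L) = walkEdges L := by
  ext; simp [walkEdges, map_fst_walkRev]

lemma walkEnd_cons_map_snd_walkRev (u : V) (L : List (E × V)) :
    walkEnd u L :: (walkRev u L).map Prod.snd = (u :: L.map Prod.snd).reverse := by
  induction L generalizing u with
  | nil => rfl
  | cons st L ih => simp [walkRev, ← ih]

lemma walkEnd_walkRev (u : V) (L : List (E × V)) : walkEnd (walkEnd u L) (walkRev u L) = u := by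
  induction L generalizing u with
  | nil => rfl
  | cons st L ih => simp [walkRev, walkEnd_append, ih]

lemma IsWalk.walkRev {u : V} {L : List (E × V)} (h : G.IsWalk u L) :
    G.IsWalk (walkEnd u L) (walkRev u L) := by
  induction L generalizing u with
  | nil => trivial
  | cons st L ih =>
    rw [walkEnd_cons, MultiGraph.walkRev, isWalk_append, walkEnd_walkRev]
    exact ⟨ih h.2, h.1.symm, trivial⟩

lemma IsPathWalk.walkRev {u : V} {L : List (E × V)} (h : G.IsPathWalk u L) :
    G.IsPathWalk (walkEnd u L) (walkRev u L) :=
  ⟨h.isWalk.walkRev, by rw [walkEnd_cons_map_snd_walkRev]; exact nodup_reverse.mpr h.nodup_verts,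
    by rw [map_fst_walkRev]; exact nodup_reverse.mpr h.nodup_edges⟩

lemma IsCycle.eq_of_subset {C D : Set E} (hC : G.IsCycle C) (hD : G.IsCycle D) (h : C ⊆ D) :
    C = D := by
  obtain ⟨-, ⟨e₀, he₀⟩, -, hCdeg⟩ := hC
  -- at a vertex of `C` the edges of `C` already realise the full degree `2` in `D`
  have hclosed : ∀ g c, g ∈ C → G.EdgeAdj D g c → c ∈ C := by
    rintro g c hg ⟨-, hcD, x, hxg, hxc⟩
    have hxC := hCdeg x ⟨g, hg, hxg⟩
    have hxD := hD.2.2.2 x ⟨g, h hg, hxg⟩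
    have hsub : ∀ φ : E → V, {e ∈ C | φ e = x} ⊆ {e ∈ D | φ e = x} :=
      fun _ e he => ⟨h he.1, he.2⟩
    have hle : ∀ φ : E → V, {e ∈ C | φ e = x}.ncard ≤ {e ∈ D | φ e = x}.ncard :=
      fun φ => Set.ncard_le_ncard (hsub φ) (hD.1.sep _)
    unfold deg at hxC hxD
    rcases hxc with hxc | hxc
    · have hc : c ∈ {e ∈ D | G.fst e = x} := ⟨hcD, hxc⟩
      rw [← Set.eq_of_subset_of_ncard_le (hsub _) (by linarith [hle G.snd]) (hD.1.sep _)] at hc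
      exact hc.1
    · have hc : c ∈ {e ∈ D | G.snd e = x} := ⟨hcD, hxc⟩
      rw [← Set.eq_of_subset_of_ncard_le (hsub _) (by linarith [hle G.fst]) (hD.1.sep _)] at hc
      exact hc.1
  have hreach : ∀ f, Relation.ReflTransGen (G.EdgeAdj D) e₀ f → f ∈ C := by
    intro f hf
    induction hf with
    | refl => exact he₀
    | tail _ hadj ih => exact hclosed _ _ ih hadj
  exact h.antisymm fun f hf => hreach f (hD.2.2.1 (h he₀) hf)

lemma isCycle_singleton {l : E} (hl : G.IsLoopEdge l) : G.IsCycle {l} := by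
  classical
  refine ⟨Set.finite_singleton l, Set.singleton_nonempty l, ?_, fun w ⟨c, hc, hw⟩ => ?_⟩
  · rintro e f rfl rfl
    exact .refl
  · obtain rfl : c = l := hc
    have hj : G.Joins c (G.fst c) (G.snd c) := Or.inl ⟨rfl, rfl⟩
    have hw' : G.fst c = w := hw.elim id (hl.trans ·)
    rw [hj.deg_singleton, ← hl, hw']
    simp

lemma IsCycle.isLink_of_ne {C : Set E} (hC : G.IsCycle C) {e f : E} (he : e ∈ C) (hf : f ∈ C)
    (hef : e ≠ f) {g : E} (hg : g ∈ C) : G.IsLink g := fun hl => by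
  have hCg := ((isCycle_singleton hl).eq_of_subset hC (Set.singleton_subset_iff.mpr hg)).symm
  rw [hCg] at he hf
  exact hef (he.trans hf.symm)

lemma IsCycle.incSet_eq_pair {C : Set E} (hC : G.IsCycle C) {e f : E} (he : e ∈ C) (hf : f ∈ C)
    (hef : e ≠ f) {x : V} (hxe : G.Inc x e) (hxf : G.Inc x f) : G.incSet C x = {e, f} := by
  have hsub : {e, f} ⊆ G.incSet C x := by
    rintro c (rfl | rfl)
    exacts [⟨he, hxe⟩, ⟨hf, hxf⟩]
  refine (Set.eq_of_subset_of_ncard_le hsub ?_ (hC.1.sep _)).symm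
  rw [Set.ncard_pair hef, ← deg_eq_ncard_incSet hC.1 (fun _ => hC.isLink_of_ne he hf hef),
    hC.2.2.2 x ⟨e, he, hxe⟩]

lemma length_le_ncard_of_walkEdges_subset {L : List (E × V)} {C : Set E}
    (hL : (L.map Prod.fst).Nodup) (hLC : walkEdges L ⊆ C) (hC : C.Finite) :
    L.length ≤ C.ncard := by
  classical
  calc L.length = (L.map Prod.fst).toFinset.card := by rw [toFinset_card_of_nodup hL, length_map]
    _ = ((L.map Prod.fst).toFinset : Set E).ncard := (Set.ncard_coe_finset _).symm
    _ ≤ C.ncard := Set.ncard_le_ncard (fun x hx => hLC (by simpa using hx)) hC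

lemma IsCycle.exists_extend {C : Set E} (hC : G.IsCycle C) (hl : ∀ g ∈ C, G.IsLink g) {u : V}
    {L : List (E × V)} (hP : G.IsPathWalk u L) (hL : L ≠ []) (hLC : walkEdges L ⊆ C) :
    ∃ c y, c ∈ C ∧ (G.IsCycleWalk u (L ++ [(c, y)]) ∨ G.IsPathWalk u (L ++ [(c, y)])) := by
  set w := walkEnd u L
  have hincL := deg_eq_ncard_incSet (walkEdges_finite L) fun g hg => hl g (hLC hg)
  have hincC := deg_eq_ncard_incSet hC.1 hl
  have hsub : ∀ x, G.incSet (walkEdges L) x ⊆ G.incSet C x := fun x e he => ⟨hLC he.1, he.2⟩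
  have hdegC : ∀ x ∈ u :: L.map Prod.snd, G.deg C x = 2 :=
    fun x hx => hC.2.2.2 x (vSet_mono hLC ((hP.isWalk.mem_vSet_walkEdges hL).mpr hx))
  have hwL := walkEnd_mem_map_snd u hL
  obtain ⟨c, ⟨hcC, hwc⟩, hcL⟩ := Set.exists_mem_notMem_of_ncard_lt_ncard
    (s := G.incSet (walkEdges L) w) (t := G.incSet C w)
    (by rw [← hincL, ← hincC, hP.deg_walkEnd hL, hdegC w (mem_cons_of_mem _ hwL)]; norm_num)
    ((walkEdges_finite L).sep _)
  replace hcL : c ∉ walkEdges L := fun h => hcL ⟨h, hwc⟩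
  obtain ⟨y, hy⟩ := exists_joins hwc
  by_cases hyu : y = u
  · subst hyu
    exact ⟨c, y, hcC, Or.inl (hP.isCycleWalk_concat hy hcL)⟩
  refine ⟨c, y, hcC, Or.inr (hP.concat hy ?_ hcL)⟩
  intro hyL
  replace hyL : y ∈ L.map Prod.snd := (mem_cons.mp hyL).resolve_left hyu
  -- an inner vertex of the path already carries both of its edges in `C`
  have heq : G.incSet (walkEdges L) y = G.incSet C y := by
    refine Set.eq_of_subset_of_ncard_le (hsub y) ?_ (hC.1.sep _)
    rw [← hincL, ← hincC, hP.deg_of_ne_walkEnd hyL (hy.ne (hl c hcC)).symm,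
      hdegC y (mem_cons_of_mem _ hyL)]
  have hcy : c ∈ G.incSet C y := ⟨hcC, hy.inc_iff.mpr (Or.inr rfl)⟩
  exact hcL (heq ▸ hcy).1

lemma IsCycle.exists_isCycleWalk {C : Set E} (hC : G.IsCycle C) (hl : ∀ g ∈ C, G.IsLink g)
    {e : E} {a b : V} (he : e ∈ C) (hab : G.Joins e a b) :
    ∃ L, G.IsCycleWalk a ((e, b) :: L) ∧ walkEdges ((e, b) :: L) = C := by
  suffices h : ∀ n L, C.ncard - L.length = n → G.IsPathWalk a ((e, b) :: L) →
      walkEdges ((e, b) :: L) ⊆ C →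
      ∃ L', G.IsCycleWalk a ((e, b) :: L') ∧ walkEdges ((e, b) :: L') = C by
    refine h _ [] rfl ⟨⟨hab, trivial⟩, ?_, by simp⟩ (fun x hx => by simp_all)
    simpa using hab.ne (hl e he)
  intro n
  induction n using Nat.strong_induction_on with
  | _ n ih =>
  intro L hn hP hLC
  have hext : ∀ c y, c ∈ C → walkEdges ((e, b) :: L ++ [(c, y)]) ⊆ C := fun c y hc => by
    rw [walkEdges_append]
    exact Set.union_subset hLC fun x hx => by simp_all
  obtain ⟨c, y, hcC, hcyc | hpath⟩ := hC.exists_extend hl hP (cons_ne_nil _ _) hLC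
  · exact ⟨L ++ [(c, y)], hcyc, hcyc.isCycle.eq_of_subset hC (hext c y hcC)⟩
  · have hlen := length_le_ncard_of_walkEdges_subset hpath.nodup_edges (hext c y hcC) hC.1
    simp only [length_append, length_cons, length_nil] at hlen
    exact ih _ (by simp only [length_append, length_cons, length_nil]; omega) (L ++ [(c, y)]) rfl
      hpath (hext c y hcC)

lemma map_snd_eq_dropLast_append (u : V) {L : List (E × V)} (hL : L ≠ []) :
    L.map Prod.snd = (L.map Prod.snd).dropLast ++ [walkEnd u L] := by
  induction L generalizing u with
  | nil => exact absurd rfl hL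
  | cons st L ih =>
    rcases eq_or_ne L [] with rfl | hL'
    · rfl
    · rw [map_cons, dropLast_cons_of_ne_nil (by simpa using hL'), cons_append, walkEnd_cons,
        ← ih st.2 hL']

lemma exists_first_hit {S : Set V} {u : V} {L : List (E × V)}
    (h : ∃ x ∈ L.map Prod.snd, x ∈ S) :
    ∃ L₁ L₂, L = L₁ ++ L₂ ∧ L₁ ≠ [] ∧ walkEnd u L₁ ∈ S ∧
      ∀ x ∈ (L₁.map Prod.snd).dropLast, x ∉ S := by
  induction L generalizing u with
  | nil => simp at h
  | cons st L ih =>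
    by_cases hst : st.2 ∈ S
    · exact ⟨[st], L, rfl, by simp, hst, by simp⟩
    obtain ⟨x, hx, hxS⟩ := h
    have hxL : x ∈ L.map Prod.snd := (mem_cons.mp hx).resolve_left fun h => hst (h ▸ hxS)
    obtain ⟨L₁, L₂, rfl, hL₁, hend, hint⟩ := ih (u := st.2) ⟨x, hxL, hxS⟩
    refine ⟨st :: L₁, L₂, rfl, cons_ne_nil _ _, hend, fun y hy => ?_⟩
    rw [map_cons, dropLast_cons_of_ne_nil (by simpa using hL₁)] at hy
    rcases mem_cons.mp hy with rfl | hy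
    exacts [hst, hint y hy]

lemma IsWalk.disjoint_walkEdges {D : Set E} {u : V} {L : List (E × V)} (h : G.IsWalk u L)
    (hL : ∀ x ∈ (u :: L.map Prod.snd).dropLast, x ∉ G.VSet D) : Disjoint (walkEdges L) D := by
  induction L generalizing u with
  | nil => simp [walkEdges]
  | cons st L ih =>
    rw [map_cons, dropLast_cons_cons] at hL
    rw [walkEdges_cons, Set.disjoint_union_left, Set.disjoint_singleton_left]
    exact ⟨fun hD => hL u mem_cons_self ⟨st.1, hD, h.1.inc_iff.mpr (Or.inl rfl)⟩,
      ih h.2 fun x hx => hL x (mem_cons_of_mem _ hx)⟩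

structure IsEar (G : MultiGraph V E) (D : Set E) (a : V) (Q : List (E × V)) : Prop where
  isPathWalk : G.IsPathWalk a Q
  ne_nil : Q ≠ []
  disjoint : Disjoint (walkEdges Q) D
  start_mem : a ∈ G.VSet D
  end_mem : walkEnd a Q ∈ G.VSet D
  vSet_inter_subset : G.VSet (walkEdges Q) ∩ G.VSet D ⊆ {a, walkEnd a Q}

lemma IsPathWalk.exists_isEar_prefix {D : Set E} {a y : V} {c : E} {L : List (E × V)}
    (h : G.IsPathWalk a ((c, y) :: L)) (hc : c ∉ D) (ha : a ∈ G.VSet D)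
    (hend : walkEnd a ((c, y) :: L) ∈ G.VSet D) :
    ∃ Q, G.IsEar D a Q ∧ c ∈ walkEdges Q ∧ walkEdges Q ⊆ walkEdges ((c, y) :: L) := by
  obtain ⟨Q, R, hQR, hQ, hQend, hQint⟩ := exists_first_hit (u := a) (S := G.VSet D)
    ⟨_, walkEnd_mem_map_snd a (cons_ne_nil _ _), hend⟩
  obtain ⟨st, Q, rfl⟩ := exists_cons_of_ne_nil hQ
  obtain ⟨rfl, rfl⟩ : st = (c, y) ∧ L = Q ++ R := by simpa [eq_comm] using hQR
  have hP : G.IsPathWalk a ((c, y) :: Q) := h.of_append_left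
  refine ⟨(c, y) :: Q, ⟨hP, hQ, ?_, ha, hQend, ?_⟩, by simp, ?_⟩
  · rw [walkEdges_cons, Set.disjoint_union_left, Set.disjoint_singleton_left]
    exact ⟨hc, hP.tail.isWalk.disjoint_walkEdges hQint⟩
  · rintro x ⟨hx, hxD⟩
    rcases mem_cons.mp ((hP.isWalk.mem_vSet_walkEdges hQ).mp hx) with rfl | hx
    · exact Or.inl rfl
    rw [map_snd_eq_dropLast_append a hQ, mem_append, List.mem_singleton] at hx
    exact Or.inr (hx.resolve_left fun h => hQint x h hxD)
  · rw [hQR, walkEdges_append]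
    exact Set.subset_union_left

lemma IsPathWalk.exists_isEar {D : Set E} {x : V} {M : List (E × V)} (h : G.IsPathWalk x M)
    (hx : x ∈ G.VSet D) (hend : walkEnd x M ∈ G.VSet D) (hMD : ¬ walkEdges M ⊆ D) :
    ∃ a Q, G.IsEar D a Q ∧ walkEdges Q ⊆ walkEdges M := by
  induction M generalizing x with
  | nil => exact absurd (by simp [walkEdges]) hMD
  | cons st M ih =>
    obtain ⟨c, y⟩ := st
    by_cases hc : c ∈ D
    · rw [walkEdges_cons, Set.union_subset_iff, Set.singleton_subset_iff] at hMD
      obtain ⟨a, Q, hQ, hQM⟩ := ih h.tail ⟨c, hc, h.isWalk.1.inc_iff.mpr (Or.inr rfl)⟩ hend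
        fun hsub => hMD ⟨hc, hsub⟩
      exact ⟨a, Q, hQ, hQM.trans (by rw [walkEdges_cons]; exact Set.subset_union_right)⟩
    · obtain ⟨Q, hQ, -, hQM⟩ := h.exists_isEar_prefix hc hx hend
      exact ⟨x, Q, hQ, hQM⟩

lemma IsCycle.exists_isEar {C D : Set E} (hC : G.IsCycle C) (hl : ∀ g ∈ C, G.IsLink g) {c : E}
    (hcC : c ∈ C) (hcD : c ∈ D) (hCD : ¬ C ⊆ D) : ∃ a Q, G.IsEar D a Q ∧ walkEdges Q ⊆ C := by
  obtain ⟨b, hab⟩ := exists_joins (G := G) (a := G.fst c) (Or.inl rfl)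
  obtain ⟨L, hL, hLC⟩ := hC.exists_isCycleWalk hl hcC hab
  obtain ⟨hP, hend, -⟩ := hL.tail
  rw [walkEdges_cons] at hLC
  subst hLC
  rw [Set.union_subset_iff, Set.singleton_subset_iff] at hCD
  obtain ⟨a, Q, hQ, hQL⟩ := hP.exists_isEar ⟨c, hcD, hab.inc_iff.mpr (Or.inr rfl)⟩
    (hend ▸ ⟨c, hcD, Or.inl rfl⟩) fun hsub => hCD ⟨hcD, hsub⟩
  exact ⟨a, Q, hQ, hQL.trans Set.subset_union_right⟩

lemma IsCycle.exists_isEar_from {D₁ D₂ : Set E} (hD₂ : G.IsCycle D₂) {f g : E} (hfg : f ≠ g)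
    {v : V} (hvf : G.Inc v f) (hvg : G.Inc v g) (hf₂ : f ∈ D₂) (hg₂ : g ∈ D₂) (hf₁ : f ∈ D₁)
    (hv₁ : v ∈ G.VSet D₁) (hg₁ : g ∉ D₁) : ∃ Q, G.IsEar D₁ v Q ∧ g ∈ walkEdges Q := by
  have hD₂v := hD₂.incSet_eq_pair hf₂ hg₂ hfg hvf hvg
  -- walk around `D₂` from the far end `w` of `f`, crossing `f` first: what remains is a path
  -- from `v` to `w ∈ V(D₁)` that leaves `v` along `g`
  obtain ⟨w, hw⟩ := exists_joins hvf
  obtain ⟨L, hL, hLD₂⟩ :=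
    hD₂.exists_isCycleWalk (fun _ => hD₂.isLink_of_ne hf₂ hg₂ hfg) hf₂ hw.symm
  obtain ⟨hP, hend, hfL⟩ := hL.tail
  obtain ⟨⟨q, y⟩, L, rfl⟩ := List.exists_cons_of_ne_nil (l := L) (by
    rintro rfl
    exact hw.ne (hD₂.isLink_of_ne hf₂ hg₂ hfg hf₂) hend)
  obtain rfl : q = g := by
    have hq : q ∈ G.incSet D₂ v := ⟨hLD₂ ▸ by simp, hP.isWalk.1.inc_iff.mpr (Or.inl rfl)⟩
    rw [hD₂v] at hq
    exact hq.resolve_left fun h => hfL (h ▸ by simp)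
  obtain ⟨Q, hQ, hgQ, -⟩ :=
    hP.exists_isEar_prefix hg₁ hv₁ (hend ▸ ⟨f, hf₁, hw.inc_iff.mpr (Or.inr rfl)⟩)
  exact ⟨Q, hQ, hgQ⟩

lemma IsCycle.exists_arcs {D : Set E} (hD : G.IsCycle D) (hl : ∀ g ∈ D, G.IsLink g) {a : V}
    {Q : List (E × V)} (hQ : G.IsEar D a Q) {h : E} (hh : h ∈ D) (hha : G.Inc a h) :
    ∃ A₁ A₂, D = A₁ ∪ A₂ ∧ Disjoint A₁ A₂ ∧ h ∈ A₁ ∧ G.IsCycle (walkEdges Q ∪ A₁) ∧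
      G.IsCycle (walkEdges Q ∪ A₂) ∧ G.VSet A₁ ∩ G.VSet A₂ ⊆ {a, walkEnd a Q} := by
  obtain ⟨hP, hQne, hQD, -, hbD, hQV⟩ := hQ
  set b := walkEnd a Q
  have hab : a ≠ b := hP.ne_walkEnd hQne
  obtain ⟨a', ha'⟩ := exists_joins hha
  obtain ⟨N, hN, hND⟩ := hD.exists_isCycleWalk hl hh ha'
  have hbN : b ∈ ((h, a') :: N).map Prod.snd :=
    (mem_cons.mp ((hN.isWalk.mem_vSet_walkEdges (cons_ne_nil _ _)).mp (hND ▸ hbD))).resolve_left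
      hab.symm
  obtain ⟨N₁, N₂, rfl, hP₁, hP₂, he₁, he₂⟩ := hN.split hbN hab.symm
  have hN₂ : N₂ ≠ [] := by rintro rfl; exact hab he₂.symm
  have hsplit : D = walkEdges ((h, a') :: N₁) ∪ walkEdges N₂ := by
    rw [← hND, ← walkEdges_append]; rfl
  have hnd : (((h, a') :: N₁).map Prod.fst ++ N₂.map Prod.fst).Nodup := by
    rw [← map_append]; exact hN.nodup_edges
  have hQA : ∀ A ⊆ D, Disjoint (walkEdges Q) A ∧ G.VSet (walkEdges Q) ∩ G.VSet A ⊆ {a, b} :=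
    fun A hA => ⟨hQD.mono_right hA, (Set.inter_subset_inter_right _ (vSet_mono hA)).trans hQV⟩
  have hA₁ := hQA _ (hsplit ▸ Set.subset_union_left)
  have hA₂ := hQA _ (hsplit ▸ Set.subset_union_right)
  refine ⟨_, _, hsplit, Set.disjoint_left.mpr fun c hc₁ hc₂ => disjoint_of_nodup_append hnd hc₁ hc₂,
    by simp, ?_, hP.isCycle_union hP₂ rfl he₂ hab hA₂.1 hA₂.2, ?_⟩
  · have hrev := hP₁.walkRev
    have hrevEnd := walkEnd_walkRev a ((h, a') :: N₁)
    rw [he₁] at hrev hrevEnd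
    rw [← walkEdges_walkRev a ((h, a') :: N₁)] at hA₁ ⊢
    exact hP.isCycle_union hrev rfl hrevEnd hab hA₁.1 hA₁.2
  · rintro x ⟨hx₁, hx₂⟩
    rcases mem_cons.mp ((hP₁.isWalk.mem_vSet_walkEdges (cons_ne_nil _ _)).mp hx₁) with rfl | hx₁
    · exact Or.inl rfl
    rcases mem_cons.mp ((hP₂.isWalk.mem_vSet_walkEdges hN₂).mp hx₂) with rfl | hx₂
    · exact Or.inr rfl
    have hnd' : (((h, a') :: N₁).map Prod.snd ++ N₂.map Prod.snd).Nodup := by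
      rw [← map_append]; exact hN.nodup_verts
    exact absurd hx₂ (disjoint_of_nodup_append hnd' hx₁)

lemma IsCycle.exists_reroute {C D : Set E} (hC : G.IsCycle C) (hD : G.IsCycle D) {e f : E}
    (hef : e ≠ f) {v : V} (hve : G.Inc v e) (hvf : G.Inc v f) (heC : e ∈ C) (hfC : f ∈ C)
    (heD : e ∈ D) (hfD : f ∈ D) (hCD : ¬ C ⊆ D) :
    ∃ P A₁ A₂, P ⊆ C ∧ Disjoint P D ∧ D = A₁ ∪ A₂ ∧ Disjoint A₁ A₂ ∧ e ∈ A₁ ∧ f ∈ A₁ ∧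
      G.IsCycle (P ∪ A₁) ∧ G.IsCycle (P ∪ A₂) ∧ v ∉ G.VSet (P ∪ A₂) := by
  have hCv := hC.incSet_eq_pair heC hfC hef hve hvf
  have hDv := hD.incSet_eq_pair heD hfD hef hve hvf
  obtain ⟨a, Q, hQ, hQC⟩ := hC.exists_isEar (fun _ => hC.isLink_of_ne heC hfC hef) heC heD hCD
  obtain ⟨h, hhD, hha⟩ := hQ.start_mem
  obtain ⟨A₁, A₂, hDA, hA, -, hc₁, hc₂, hA₁₂⟩ :=
    hD.exists_arcs (fun _ => hD.isLink_of_ne heD hfD hef) hQ hhD hha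
  set P := walkEdges Q
  -- an edge of the ear at `v` would be `e` or `f`, which lie in `D`
  have hvP : v ∉ G.VSet P := fun ⟨c, hcP, hvc⟩ => by
    have hc : c ∈ G.incSet C v := ⟨hQC hcP, hvc⟩
    rw [hCv] at hc
    exact Set.disjoint_left.mp hQ.disjoint hcP (by rcases hc with rfl | rfl <;> assumption)
  have hvA : v ∉ G.VSet A₁ ∩ G.VSet A₂ := fun hvA => by
    have hQ' := hQ.isPathWalk.isWalk.mem_vSet_walkEdges hQ.ne_nil (w := v)
    rcases hA₁₂ hvA with rfl | rfl
    · exact hvP (hQ'.mpr List.mem_cons_self)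
    · exact hvP (hQ'.mpr (walkEnd_mem _ _))
  clear hA₁₂
  wlog h₁ : e ∈ A₁ ∧ f ∈ A₁ generalizing A₁ A₂
  · refine this A₂ A₁ (hDA.trans (Set.union_comm _ _)) hA.symm hc₂ hc₁
      (by rwa [Set.inter_comm]) ?_
    have hmix : ∀ x y, x ∈ A₁ → y ∈ A₂ → G.Inc v x → G.Inc v y → False :=
      fun x y hx hy hvx hvy => hvA ⟨⟨x, hx, hvx⟩, ⟨y, hy, hvy⟩⟩
    rcases hDA ▸ heD with he | he <;> rcases hDA ▸ hfD with hf | hf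
    exacts [absurd ⟨he, hf⟩ h₁, (hmix e f he hf hve hvf).elim, (hmix f e hf he hvf hve).elim,
      ⟨he, hf⟩]
  have hvA₂ : v ∉ G.VSet A₂ := fun ⟨c, hc, hvc⟩ => by
    have hcv : c ∈ G.incSet D v := ⟨hDA ▸ Or.inr hc, hvc⟩
    rw [hDv] at hcv
    exact Set.disjoint_left.mp hA (by rcases hcv with rfl | rfl; exacts [h₁.1, h₁.2]) hc
  have hvPA₂ : v ∉ G.VSet (P ∪ A₂) := by
    rw [vSet_union]
    rintro (h | h)
    exacts [hvP h, hvA₂ h]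
  exact ⟨P, A₁, A₂, hQC, hQ.disjoint, hDA, hA, h₁.1, h₁.2, hc₁, hc₂, hvPA₂⟩

end MultiGraph

namespace BiasedGraph

open MultiGraph

variable {V : Type u} {E : Type v} {Ω : BiasedGraph V E}

def IsBalancing (Ω : BiasedGraph V E) (v : V) : Prop :=
  ∀ C : Set E, Ω.IsCycle C → v ∉ Ω.VSet C → C ∈ Ω.Balanced

def OnCommonBalancedCycle (Ω : BiasedGraph V E) (e f : E) : Prop :=
  ∃ C ∈ Ω.Balanced, Ω.IsCycle C ∧ e ∈ C ∧ f ∈ C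

/-- `P ∪ A₁` is the symmetric difference of the cycles `D` and `P ∪ A₂`. -/
lemma ThetaProperty.union_mem_balanced (hθ : Ω.ThetaProperty) {D A₁ A₂ P : Set E}
    (hD : Ω.IsCycle D) (hDA : D = A₁ ∪ A₂) (hA : Disjoint A₁ A₂) (hPD : Disjoint P D)
    (h₁ : Ω.IsCycle (P ∪ A₁)) (h₂ : Ω.IsCycle (P ∪ A₂)) (hDb : D ∈ Ω.Balanced)
    (h₂b : P ∪ A₂ ∈ Ω.Balanced) : P ∪ A₁ ∈ Ω.Balanced := by
  refine hθ.2 D (P ∪ A₂) (P ∪ A₁) hD h₂ h₁ ?_ hDb h₂b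
  subst hDA
  ext x
  have hA' : x ∈ A₁ → x ∉ A₂ := fun h => Set.disjoint_left.mp hA h
  have hPD' : x ∈ P → x ∉ A₁ ∪ A₂ := fun h => Set.disjoint_left.mp hPD h
  simp only [Set.mem_symmDiff, Set.mem_union] at hPD' ⊢
  tauto

lemma IsBalancing.exists_balanced_closer (hθ : Ω.ThetaProperty) {v : V} (hv : Ω.IsBalancing v)
    {e f : E} (hef : e ≠ f) (hve : Ω.Inc v e) (hvf : Ω.Inc v f) {C D : Set E}
    (hC : Ω.IsCycle C) (hD : Ω.IsCycle D) (heC : e ∈ C) (hfC : f ∈ C) (heD : e ∈ D)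
    (hfD : f ∈ D) (hDb : D ∈ Ω.Balanced) (hCD : ¬ C ⊆ D) :
    ∃ D', Ω.IsCycle D' ∧ e ∈ D' ∧ f ∈ D' ∧ D' ∈ Ω.Balanced ∧ D' \ C ⊂ D \ C := by
  obtain ⟨P, A₁, A₂, hPC, hPD, hDA, hA, heA, hfA, hc₁, hc₂, hvP⟩ :=
    hC.exists_reroute hD hef hve hvf heC hfC heD hfD hCD
  refine ⟨P ∪ A₁, hc₁, Or.inr heA, Or.inr hfA,
    hθ.union_mem_balanced hD hDA hA hPD hc₁ hc₂ hDb (hv _ hc₂ hvP), ?_⟩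
  -- if `A₂ ⊆ C` then the cycle `P ∪ A₂` would be all of `C`, which passes through `v`
  have hA₂C : ¬ A₂ ⊆ C := fun hA₂ =>
    hvP (hc₂.eq_of_subset hC (Set.union_subset hPC hA₂) ▸ ⟨e, heC, hve⟩)
  obtain ⟨z, hzA₂, hzC⟩ := Set.not_subset.mp hA₂C
  refine ⟨fun x ⟨hx, hxC⟩ => ⟨?_, hxC⟩, fun hsub => ?_⟩
  · rcases hx with hx | hx
    exacts [absurd (hPC hx) hxC, hDA ▸ Or.inl hx]
  · rcases (hsub ⟨hDA ▸ Or.inr hzA₂, hzC⟩).1 with hz | hz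
    exacts [Set.disjoint_left.mp hPD hz (hDA ▸ Or.inr hzA₂), Set.disjoint_left.mp hA hz hzA₂]

lemma IsBalancing.mem_balanced_of_onCommonBalancedCycle (hθ : Ω.ThetaProperty) {v : V}
    (hv : Ω.IsBalancing v) {e f : E} (hef : e ≠ f) (hve : Ω.Inc v e) (hvf : Ω.Inc v f)
    {C : Set E} (hC : Ω.IsCycle C) (heC : e ∈ C) (hfC : f ∈ C) (h : Ω.OnCommonBalancedCycle e f) :
    C ∈ Ω.Balanced := by
  obtain ⟨D, hDb, hD, heD, hfD⟩ := h
  induction hn : (D \ C).ncard using Nat.strong_induction_on generalizing D with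
  | _ n ih =>
  by_cases hCD : C ⊆ D
  · rwa [hC.eq_of_subset hD hCD]
  obtain ⟨D', hD', heD', hfD', hD'b, hlt⟩ :=
    hv.exists_balanced_closer hθ hef hve hvf hC hD heC hfC heD hfD hDb hCD
  exact ih _ (hn ▸ Set.ncard_lt_ncard hlt hD.1.sdiff) D' hD'b hD' heD' hfD' rfl

lemma IsBalancing.onCommonBalancedCycle_trans (hθ : Ω.ThetaProperty) {v : V}
    (hv : Ω.IsBalancing v) {e f g : E} (heg : e ≠ g) (hve : Ω.Inc v e) (hvf : Ω.Inc v f)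
    (hvg : Ω.Inc v g) (h₁ : Ω.OnCommonBalancedCycle e f) (h₂ : Ω.OnCommonBalancedCycle f g) :
    Ω.OnCommonBalancedCycle e g := by
  by_cases hef : e = f
  · exact hef ▸ h₂
  by_cases hfg : f = g
  · exact hfg ▸ h₁
  obtain ⟨D₁, hD₁b, hD₁, he₁, hf₁⟩ := h₁
  obtain ⟨D₂, hD₂b, hD₂, hf₂, hg₂⟩ := h₂
  have hgD₁ : g ∉ D₁ := fun hg => by
    have hgv : g ∈ Ω.incSet D₁ v := ⟨hg, hvg⟩
    rw [hD₁.incSet_eq_pair he₁ hf₁ hef hve hvf] at hgv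
    rcases hgv with h | h
    exacts [heg h.symm, hfg h.symm]
  obtain ⟨Q, hQ, hgQ⟩ := hD₂.exists_isEar_from hfg hvf hvg hf₂ hg₂ hf₁ ⟨e, he₁, hve⟩ hgD₁
  obtain ⟨A₁, A₂, hDA, hA, heA₁, hc₁, hc₂, -⟩ :=
    hD₁.exists_arcs (fun _ => hD₁.isLink_of_ne he₁ hf₁ hef) hQ he₁ hve
  -- `f ∉ A₁`, since the cycle `Q ∪ A₁` already has the two edges `g` and `e` at `v`
  have hfA₂ : f ∈ A₂ := by
    refine (hDA ▸ hf₁ : f ∈ A₁ ∪ A₂).resolve_left fun hfA₁ => ?_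
    have hfv : f ∈ Ω.incSet (walkEdges Q ∪ A₁) v := ⟨Or.inr hfA₁, hvf⟩
    rw [hc₁.incSet_eq_pair (Or.inl hgQ) (Or.inr heA₁) (Ne.symm heg) hvg hve] at hfv
    rcases hfv with h | h
    exacts [hfg h, hef h.symm]
  have hb₂ : walkEdges Q ∪ A₂ ∈ Ω.Balanced :=
    hv.mem_balanced_of_onCommonBalancedCycle hθ hfg hvf hvg hc₂ (Or.inr hfA₂) (Or.inl hgQ)
      ⟨D₂, hD₂b, hD₂, hf₂, hg₂⟩
  exact ⟨_, hθ.union_mem_balanced hD₁ hDA hA hQ.disjoint hc₁ hc₂ hD₁b hb₂, hc₁, Or.inr heA₁,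
    Or.inl hgQ⟩

end BiasedGraph

theorem stmt_6 {V E : Type*} (Ω : BiasedGraph V E) (hθ : Ω.ThetaProperty) (v : V)
    (hbal : ∀ C : Set E, Ω.toMultiGraph.IsCycle C → v ∉ Ω.toMultiGraph.VSet C → C ∈ Ω.Balanced) :
    (Equivalence (fun e f : {e : E // Ω.toMultiGraph.IsLink e ∧ Ω.toMultiGraph.Inc v e} =>
        e = f ∨ ∃ C ∈ Ω.Balanced, Ω.toMultiGraph.IsCycle C ∧ e.1 ∈ C ∧ f.1 ∈ C)) ∧
    ∀ C : Set E, Ω.toMultiGraph.IsCycle C → v ∈ Ω.toMultiGraph.VSet C →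
      ∀ e f : E, e ∈ C → f ∈ C → e ≠ f →
        Ω.toMultiGraph.IsLink e → Ω.toMultiGraph.IsLink f → Ω.toMultiGraph.Inc v e → Ω.toMultiGraph.Inc v f →
        (C ∈ Ω.Balanced ↔
          (e = f ∨ ∃ D ∈ Ω.Balanced, Ω.toMultiGraph.IsCycle D ∧ e ∈ D ∧ f ∈ D)) := by
  have hv : Ω.IsBalancing v := hbal
  refine ⟨⟨fun _ => Or.inl rfl, ?_, ?_⟩, ?_⟩
  · rintro x y (rfl | ⟨C, hCb, hC, hx, hy⟩)
    exacts [Or.inl rfl, Or.inr ⟨C, hCb, hC, hy, hx⟩]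
  · rintro x y z (rfl | hxy) (rfl | hyz)
    · exact Or.inl rfl
    · exact Or.inr hyz
    · exact Or.inr hxy
    · by_cases hxz : x = z
      · exact Or.inl hxz
      exact Or.inr (hv.onCommonBalancedCycle_trans hθ (fun h => hxz (Subtype.ext h)) x.2.2 y.2.2
        z.2.2 hxy hyz)
  · intro C hC _ e f heC hfC hef _ _ hve hvf
    refine ⟨fun hCb => Or.inr ⟨C, hCb, hC, heC, hfC⟩, ?_⟩
    rintro (h | h)
    exacts [absurd h hef, hv.mem_balanced_of_onCommonBalancedCycle hθ hef hve hvf hC heC hfC h]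
end
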